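/- arXiv:math/0411616 — 5 statements merged into one kernel-verified Lean document; each statement's English description precedes it below -/
import Mathlib

section
/- Let τ be a random variable with Poisson distribution with parameter A ≥ 2. Then there exists an absolute constant C₁ > 0 such that for all p ≥ 2, E[|τ - A|^p]^{1/p} ≤ C₁ √A · p / log p. -/
/-!
Exponential moment method. For `l > 0` one has `|x| ^ p ≤ (p / (e l)) ^ p (e ^ (l x) + e ^ (-l x))`,
and the centred Poisson variable has `𝔼 e ^ (l (τ - A)) = exp (A (e ^ l - l - 1))`. Hence, if
`A (e ^ (± l) ∓ l - 1) ≤ c p`, then `‖τ - A‖_p ≤ 2 e ^ (c - 1) p / l`. For `p ≤ A` take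
`l = √(p / A) ≤ 1`, where `e ^ (± l) ∓ l - 1 ≤ l ^ 2`, to get `‖τ - A‖_p ≤ 2 √(p A)`; for `p ≥ A`
take `l = 1 + log (p / A) / 2`, so that `A e ^ l = e √(p A) ≤ e p`, to get
`‖τ - A‖_p ≲ p / (2 + log (p / A))`. Both are `O(√A p / log p)` because `log x ≤ 2 √x`.
-/

open MeasureTheory ProbabilityTheory Real
open scoped Nat NNReal

lemma rpow_le_div_exp_one_rpow_mul_exp {y p : ℝ} (hy : 0 ≤ y) (hp : 0 < p) :
    y ^ p ≤ (p / exp 1) ^ p * exp y := by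
  have hlin : y ≤ p / exp 1 * exp (y / p) := by
    have h := add_one_le_exp (y / p - 1)
    rw [exp_sub] at h
    calc y = p * (y / p - 1 + 1) := by field_simp; ring
      _ ≤ p * (exp (y / p) / exp 1) := by gcongr
      _ = p / exp 1 * exp (y / p) := by ring
  calc y ^ p ≤ (p / exp 1 * exp (y / p)) ^ p := by gcongr
    _ = (p / exp 1) ^ p * exp y := by
      rw [mul_rpow (by positivity) (exp_pos _).le, ← exp_mul, div_mul_cancel₀ _ hp.ne']

lemma abs_rpow_le_mul_exp_add_exp {p l : ℝ} (hp : 0 < p) (hl : 0 < l) (x : ℝ) :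
    |x| ^ p ≤ (p / (exp 1 * l)) ^ p * (exp (l * x) + exp (-l * x)) := by
  have habs : l * |x| = |l * x| := by rw [abs_mul, abs_of_pos hl]
  calc |x| ^ p = (l * |x|) ^ p / l ^ p := by
        rw [mul_rpow hl.le (abs_nonneg x)]; field_simp
    _ ≤ (p / exp 1) ^ p * exp |l * x| / l ^ p := by
        rw [habs]; gcongr; exact rpow_le_div_exp_one_rpow_mul_exp (abs_nonneg _) hp
    _ ≤ (p / exp 1) ^ p * (exp (l * x) + exp (-l * x)) / l ^ p := by
        rw [neg_mul]; gcongr; exact exp_abs_le _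
    _ = (p / (exp 1 * l)) ^ p * (exp (l * x) + exp (-l * x)) := by
        rw [← div_div, div_rpow (by positivity) hl.le]; ring

lemma log_le_two_mul_sqrt {x : ℝ} (hx : 0 ≤ x) : log x ≤ 2 * √x := by
  have h := log_le_rpow_div hx (ε := 1 / 2) (by norm_num)
  rw [sqrt_eq_rpow]; linarith

lemma log_le_sqrt_mul_two_add_log_div {a x : ℝ} (ha : 1 ≤ a) (hax : a ≤ x) :
    log x ≤ √a * (2 + log (x / a)) := by
  have hlog_div : 0 ≤ log (x / a) := log_nonneg ((one_le_div (by linarith)).2 hax)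
  calc log x = log a + log (x / a) := by rw [log_div (by linarith) (by linarith)]; ring
    _ ≤ 2 * √a + √a * log (x / a) := by
        gcongr
        · exact log_le_two_mul_sqrt (by linarith)
        · exact le_mul_of_one_le_left hlog_div (one_le_sqrt.2 ha)
    _ = √a * (2 + log (x / a)) := by ring

section Moments

variable {Ω : Type*} [MeasurableSpace Ω] {μ : Measure Ω} {X : Ω → ℝ} {p l c : ℝ}

lemma integral_abs_rpow_le_mgf_add_mgf (hp : 0 < p) (hl : 0 < l)
    (hpos : Integrable (fun ω ↦ exp (l * X ω)) μ) (hneg : Integrable (fun ω ↦ exp (-l * X ω)) μ) :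
    ∫ ω, |X ω| ^ p ∂μ ≤ (p / (exp 1 * l)) ^ p * (mgf X μ l + mgf X μ (-l)) := by
  rw [mgf, mgf, ← integral_add hpos hneg, ← integral_const_mul]
  exact integral_mono_of_nonneg (.of_forall fun ω ↦ by positivity) ((hpos.add hneg).const_mul _)
    (.of_forall fun ω ↦ abs_rpow_le_mul_exp_add_exp hp hl (X ω))

lemma integral_abs_rpow_rpow_inv_le_of_mgf_le (hp : 1 ≤ p) (hl : 0 < l)
    (hpos : Integrable (fun ω ↦ exp (l * X ω)) μ) (hneg : Integrable (fun ω ↦ exp (-l * X ω)) μ)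
    (hmgf_pos : mgf X μ l ≤ exp (c * p)) (hmgf_neg : mgf X μ (-l) ≤ exp (c * p)) :
    (∫ ω, |X ω| ^ p ∂μ) ^ (1 / p) ≤ 2 * exp (c - 1) * p / l := by
  have hp0 : 0 < p := by linarith
  have hbound : ∫ ω, |X ω| ^ p ∂μ ≤ (p / (exp 1 * l)) ^ p * (2 * exp (c * p)) :=
    (integral_abs_rpow_le_mgf_add_mgf hp0 hl hpos hneg).trans (by gcongr; linarith)
  have htwo : (2 : ℝ) ^ (1 / p) ≤ 2 :=
    rpow_le_self_of_one_le one_le_two (by rw [div_le_one hp0]; exact hp)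
  calc (∫ ω, |X ω| ^ p ∂μ) ^ (1 / p)
      ≤ ((p / (exp 1 * l)) ^ p * (2 * exp (c * p))) ^ (1 / p) := by
        gcongr
    _ = p / (exp 1 * l) * 2 ^ (1 / p) * exp c := by
        rw [mul_rpow (by positivity) (by positivity), mul_rpow (by positivity) (by positivity),
          ← rpow_mul (by positivity), ← exp_mul, mul_one_div_cancel hp0.ne', rpow_one,
          mul_one_div, mul_div_cancel_right₀ _ hp0.ne']
        ring
    _ ≤ p / (exp 1 * l) * 2 * exp c := by gcongr
    _ = 2 * exp (c - 1) * p / l := by rw [exp_sub]; field_simp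

end Moments

lemma hasSum_poisson_mul_pow (r : ℝ≥0) (t : ℝ) :
    HasSum (fun n : ℕ ↦ exp (-r) * r ^ n / n ! * t ^ n) (exp (r * (t - 1))) := by
  have hterm : (fun n : ℕ ↦ exp (-r) * r ^ n / n ! * t ^ n)
      = fun n ↦ exp (-r) * ((r * t) ^ n / n !) := by
    funext n; ring
  have hexp : HasSum (fun n : ℕ ↦ ((r : ℝ) * t) ^ n / n !) (exp (r * t)) := by
    rw [exp_eq_exp_ℝ]; exact NormedSpace.expSeries_div_hasSum_exp _
  rw [hterm, show (r : ℝ) * (t - 1) = -r + r * t by ring, exp_add]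
  exact hexp.mul_left _

lemma integrable_pow_poissonMeasure (r : ℝ≥0) (t : ℝ) :
    Integrable (fun n : ℕ ↦ t ^ n) (poissonMeasure r) :=
  integrable_poissonMeasure_iff.2 <| by
    simpa only [norm_pow, Real.norm_eq_abs] using (hasSum_poisson_mul_pow r |t|).summable

lemma integral_pow_poissonMeasure (r : ℝ≥0) (t : ℝ) :
    ∫ n : ℕ, t ^ n ∂poissonMeasure r = exp (r * (t - 1)) :=
  (hasSum_integral_poissonMeasure (integrable_pow_poissonMeasure r t)).unique <| by
    simpa only [smul_eq_mul] using hasSum_poisson_mul_pow r t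

lemma exp_mul_natCast_sub (t a : ℝ) (n : ℕ) :
    exp (t * (n - a)) = exp (-(t * a)) * exp t ^ n := by
  rw [← exp_nat_mul, ← exp_add]; ring_nf

lemma integrable_exp_mul_sub_poissonMeasure (r : ℝ≥0) (t : ℝ) :
    Integrable (fun n : ℕ ↦ exp (t * ((n : ℝ) - r))) (poissonMeasure r) := by
  simpa only [exp_mul_natCast_sub] using (integrable_pow_poissonMeasure r (exp t)).const_mul _

lemma mgf_sub_poissonMeasure (r : ℝ≥0) (t : ℝ) :
    mgf (fun n : ℕ ↦ (n : ℝ) - r) (poissonMeasure r) t = exp (r * (exp t - t - 1)) := by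
  simp only [mgf, exp_mul_natCast_sub, integral_const_mul, integral_pow_poissonMeasure, ← exp_add]
  ring_nf

lemma rpow_inv_integral_abs_sub_rpow_poissonMeasure_le {r : ℝ≥0} {p l c : ℝ} (hp : 1 ≤ p)
    (hl : 0 < l) (hpos : r * (exp l - l - 1) ≤ c * p) (hneg : r * (exp (-l) + l - 1) ≤ c * p) :
    (∫ n : ℕ, |(n : ℝ) - r| ^ p ∂poissonMeasure r) ^ (1 / p) ≤ 2 * exp (c - 1) * p / l :=
  integral_abs_rpow_rpow_inv_le_of_mgf_le (X := fun n : ℕ ↦ (n : ℝ) - r) hp hl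
    (integrable_exp_mul_sub_poissonMeasure r l) (integrable_exp_mul_sub_poissonMeasure r (-l))
    (by rw [mgf_sub_poissonMeasure]; exact exp_le_exp.2 hpos)
    (by rw [mgf_sub_poissonMeasure, sub_neg_eq_add]; exact exp_le_exp.2 hneg)

lemma rpow_inv_integral_abs_sub_rpow_poissonMeasure_le_of_le {r : ℝ≥0} {p : ℝ} (hp : 1 ≤ p)
    (hpr : p ≤ r) :
    (∫ n : ℕ, |(n : ℝ) - r| ^ p ∂poissonMeasure r) ^ (1 / p) ≤ 2 * √(p * r) := by
  have hp0 : 0 < p := by linarith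
  have hr0 : (0 : ℝ) < r := by linarith
  set l := √(p / r) with hl_def
  have hl : 0 < l := sqrt_pos.2 (by positivity)
  have hl_abs : |l| ≤ 1 := by
    rw [abs_of_pos hl]; exact sqrt_le_one.2 ((div_le_one hr0).2 hpr)
  have hrl : (r : ℝ) * l ^ 2 = p := by rw [sq_sqrt (by positivity)]; field_simp
  have hexp_pos : exp l - l - 1 ≤ l ^ 2 := by
    linarith [(abs_le.1 (abs_exp_sub_one_sub_id_le hl_abs)).2]
  have hexp_neg : exp (-l) + l - 1 ≤ l ^ 2 := by
    linarith [neg_sq l, (abs_le.1 (abs_exp_sub_one_sub_id_le (x := -l) (by rwa [abs_neg]))).2]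
  calc _ ≤ 2 * exp (1 - 1) * p / l :=
        rpow_inv_integral_abs_sub_rpow_poissonMeasure_le hp hl
          (by rw [one_mul, ← hrl]; gcongr) (by rw [one_mul, ← hrl]; gcongr)
    _ = 2 * √(p * r) := by
        rw [sub_self, exp_zero, hl_def, sqrt_div hp0.le, sqrt_mul hp0.le]
        field_simp
        rw [sq_sqrt hp0.le]

lemma rpow_inv_integral_abs_sub_rpow_poissonMeasure_le_of_ge {r : ℝ≥0} {p : ℝ}
    (hr : (0 : ℝ) < r) (hp : 1 ≤ p) (hrp : r ≤ p) :
    (∫ n : ℕ, |(n : ℝ) - r| ^ p ∂poissonMeasure r) ^ (1 / p)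
      ≤ 4 * exp (exp 1 - 1) * p / (2 + log (p / r)) := by
  have hp0 : 0 < p := hr.trans_le hrp
  have hlog : 0 ≤ log (p / r) := log_nonneg ((one_le_div hr).2 hrp)
  set l := 1 + log (p / r) / 2 with hl_def
  have hl : 0 < l := by positivity
  have hexp_l : exp l = exp 1 * √(p / r) := by
    rw [hl_def, exp_add, ← log_sqrt (by positivity), exp_log (sqrt_pos.2 (by positivity))]
  have hr_exp_l : r * exp l ≤ exp 1 * p := by
    have hsqrt : (r : ℝ) * √(p / r) ≤ p := by
      calc (r : ℝ) * √(p / r) = √(r * p) := by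
            rw [sqrt_div hp0.le, sqrt_mul hr.le]
            field_simp
            rw [sq_sqrt hr.le]
        _ ≤ √(p * p) := by gcongr
        _ = p := sqrt_mul_self hp0.le
    rw [hexp_l, mul_left_comm]; gcongr
  have hexp_neg : exp (-l) ≤ 1 := exp_le_one_iff.2 (by linarith)
  calc _ ≤ 2 * exp (exp 1 - 1) * p / l :=
        rpow_inv_integral_abs_sub_rpow_poissonMeasure_le hp hl
          (by nlinarith [add_one_le_exp l]) (by nlinarith [add_one_le_exp l])
    _ = 4 * exp (exp 1 - 1) * p / (2 + log (p / r)) := by rw [hl_def]; field_simp; ring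

/-- Centered moments of a Poisson random variable with parameter `A ≥ 2`:
`‖τ - A‖_p ≤ C₁ √A · p / log p` for `p ≥ 2`, with an absolute constant `C₁`. -/
theorem stmt2 :
    ∃ C₁ : ℝ, 0 < C₁ ∧
      ∀ A : NNReal, 2 ≤ (A : ℝ) →
        ∀ p : ℝ, 2 ≤ p →
          (∫ n : ℕ, |(n : ℝ) - A| ^ p ∂(poissonMeasure A)) ^ (1 / p)
            ≤ C₁ * Real.sqrt A * p / Real.log p := by
  refine ⟨4 * exp (exp 1 - 1), by positivity, fun A hA p hp ↦ ?_⟩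
  have hlogp : 0 < log p := log_pos (by linarith)
  have hE : 1 ≤ exp (exp 1 - 1) := one_le_exp (by linarith [add_one_le_exp 1])
  rcases le_total p A with hpA | hAp
  · calc _ ≤ 2 * √(p * A) :=
          rpow_inv_integral_abs_sub_rpow_poissonMeasure_le_of_le (by linarith) hpA
      _ = 4 * √A * p / (2 * √p) := by
          rw [sqrt_mul (by linarith)]; field_simp; rw [sq_sqrt (by linarith)]; ring
      _ ≤ 4 * √A * p / log p := by
          gcongr; exact log_le_two_mul_sqrt (by linarith)
      _ ≤ 4 * exp (exp 1 - 1) * √A * p / log p := by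
          gcongr; linarith
  · calc _ ≤ 4 * exp (exp 1 - 1) * p / (2 + log (p / A)) :=
          rpow_inv_integral_abs_sub_rpow_poissonMeasure_le_of_ge (by linarith) (by linarith) hAp
      _ = 4 * exp (exp 1 - 1) * √A * p / (√A * (2 + log (p / A))) := by
          field_simp
      _ ≤ 4 * exp (exp 1 - 1) * √A * p / log p := by
          gcongr; exact log_le_sqrt_mul_two_add_log_div (by linarith) hAp
end

section
/- Let ξ be a symmetric random variable with P(|ξ| > x) = exp(-x^m) for x ≥ 0, where m > 1. Then the cumulant generating function φ(λ) = log E[exp(λξ)] satisfies: there exist constants 0 < C₁ ≤ C₂ < ∞ (depending on m) such that C₁ ψ(λ) ≤ φ(λ) ≤ C₂ ψ(λ) for all λ ∈ ℝ, where ψ(λ) = λ² for |λ| ≤ 2 and ψ(λ) = C₃|λ|^{m/(m-1)} for |λ| > 2 (for an appropriate constant C₃ > 0). -/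
/-!
By symmetry, `E e^{λξ} = E cosh (λξ)`. The tail hypothesis makes `exp (|ξ|^m / 2)` integrable
(it exceeds `t ≥ 1` with probability `t⁻²`, so its mean is `2`), and Young's inequality
`ab ≤ A a^q + b^m / 2`, `q = m / (m - 1)`, then bounds `E e^{λξ} ≤ 2 exp (A |λ|^q)`.
Near `0`, `1 + t²/2 ≤ cosh t ≤ 1 + t²/2 · e^{|t|}` gives `E cosh (λξ) = 1 + Θ(λ²)`.
For large `λ`, restricting to `{|ξ| > x}` with `x^{m-1} = |λ|/2` gives
`E cosh (λξ) ≥ exp ((|λ|/2)^q) / 2`. Taking logarithms yields both bounds.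
-/

open MeasureTheory ProbabilityTheory Real Set

namespace Real

lemma one_add_sq_div_two_le_cosh (t : ℝ) : 1 + t ^ 2 / 2 ≤ cosh t := by
  have h := sum_le_hasSum (Finset.range 2) (fun n _ => by rw [pow_mul]; positivity) (hasSum_cosh t)
  simpa [Finset.sum_range_succ] using h

lemma sinh_le_mul_exp (u : ℝ) : sinh u ≤ u * exp u := by
  have h : 1 - 2 * u ≤ exp (-(2 * u)) := by linarith [add_one_le_exp (-(2 * u))]
  have hsplit : exp (-u) = exp (-(2 * u)) * exp u := by rw [← exp_add]; ring_nf
  rw [sinh_eq, hsplit]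
  nlinarith [exp_pos u]

lemma cosh_le_one_add_sq_div_two_mul_exp_abs (t : ℝ) : cosh t ≤ 1 + t ^ 2 / 2 * exp |t| := by
  have hhalf : cosh t = 1 + 2 * sinh (|t| / 2) ^ 2 := by
    rw [← cosh_abs]
    conv_lhs => rw [show |t| = 2 * (|t| / 2) by ring, cosh_two_mul, cosh_sq]
    ring
  have hs := sinh_le_mul_exp (|t| / 2)
  have hs0 : 0 ≤ sinh (|t| / 2) := sinh_nonneg_iff.2 (by positivity)
  have he : exp (|t| / 2) ^ 2 = exp |t| := by rw [← exp_nat_mul]; ring_nf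
  rw [hhalf, ← sq_abs t, ← he]
  nlinarith [mul_le_mul hs hs hs0 (by positivity)]

theorem exists_mul_le_rpow_add_rpow {p q : ℝ} (hpq : p.HolderConjugate q) {ε : ℝ} (hε : 0 < ε) :
    ∃ A > 0, ∀ a b : ℝ, 0 ≤ a → 0 ≤ b → a * b ≤ A * a ^ q + ε * b ^ p := by
  set k := (ε * p) ^ p⁻¹
  have hk : 0 < k := rpow_pos_of_pos (mul_pos hε hpq.pos) _
  have hkp : k ^ p = ε * p := by
    rw [← rpow_mul (mul_pos hε hpq.pos).le, inv_mul_cancel₀ hpq.ne_zero, rpow_one]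
  refine ⟨(k ^ q * q)⁻¹, by have := hpq.symm.pos; positivity, fun a b ha hb => ?_⟩
  have h := young_inequality_of_nonneg (div_nonneg ha hk.le) (mul_nonneg hk.le hb) hpq.symm
  rw [div_rpow ha hk.le, mul_rpow hk.le hb, hkp] at h
  calc a * b = a / k * (k * b) := by field_simp
    _ ≤ _ := h
    _ = _ := by field_simp [hpq.ne_zero, hpq.symm.ne_zero]

section Young

variable {m A q : ℝ} (hyoung : ∀ a b : ℝ, 0 ≤ a → 0 ≤ b → a * b ≤ A * a ^ q + b ^ m / 2)
include hyoung

lemma exp_mul_le_of_young (l x : ℝ) : exp (l * x) ≤ exp (A * |l| ^ q) * exp (|x| ^ m / 2) := by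
  rw [← exp_add]
  exact exp_le_exp.2 ((le_abs_self _).trans
    ((abs_mul l x).trans_le (hyoung _ _ (abs_nonneg l) (abs_nonneg x))))

lemma cosh_mul_le_of_young {l : ℝ} (hl : |l| ≤ 2) (x : ℝ) :
    cosh (l * x) ≤ 1 + l ^ 2 / 2 * (exp (A * 4 ^ q) * exp (|x| ^ m / 2)) := by
  have hsq : |x| ^ 2 ≤ exp (2 * |x|) :=
    calc |x| ^ 2 ≤ exp |x| ^ 2 :=
          pow_le_pow_left₀ (abs_nonneg x) (by linarith [add_one_le_exp |x|]) 2
      _ = exp (2 * |x|) := by rw [← exp_nat_mul]; norm_num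
  have h4 : exp (4 * |x|) ≤ exp (A * 4 ^ q) * exp (|x| ^ m / 2) := by
    simpa using exp_mul_le_of_young hyoung 4 |x|
  calc cosh (l * x) ≤ 1 + (l * x) ^ 2 / 2 * exp |l * x| :=
        cosh_le_one_add_sq_div_two_mul_exp_abs _
    _ = 1 + l ^ 2 / 2 * (|x| ^ 2 * exp (|l| * |x|)) := by rw [abs_mul, mul_pow, sq_abs]; ring
    _ ≤ 1 + l ^ 2 / 2 * (exp (2 * |x|) * exp (2 * |x|)) := by gcongr
    _ = 1 + l ^ 2 / 2 * exp (4 * |x|) := by rw [← exp_add]; ring_nf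
    _ ≤ _ := by gcongr

end Young

/-- `x = (s/2)^{1/(m-1)}` solves `x^{m-1} = s/2`, so `s x - x^m = s x / 2`. -/
lemma mul_sub_rpow_eq_rpow_div_sub_one {m s : ℝ} (hm : 1 < m) (hs : 0 ≤ s) :
    s * (s / 2) ^ (m - 1)⁻¹ - ((s / 2) ^ (m - 1)⁻¹) ^ m = (s / 2) ^ (m / (m - 1)) := by
  have hm1 : m - 1 ≠ 0 := by linarith
  have hy : 0 ≤ s / 2 := by positivity
  have hexp : 1 + (m - 1)⁻¹ = m / (m - 1) := by field_simp; ring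
  have hmul : s * (s / 2) ^ (m - 1)⁻¹ = 2 * (s / 2) ^ (m / (m - 1)) := by
    rw [← hexp, rpow_add' hy (by rw [hexp]; positivity), rpow_one]; ring
  rw [hmul, ← rpow_mul hy, inv_mul_eq_div]
  ring

lemma min_mul_le_of_le_of_mul_sub_le {a b d f g : ℝ} (ha : 0 < a) (hb : 0 < b) (hd : 0 < d)
    (hag : a ≤ g) (hbg : b * f - d ≤ g) : min (b / 2) (a * b / (2 * d)) * f ≤ g := by
  rcases le_or_gt (2 * d) (b * f) with hf | hf
  · calc min (b / 2) (a * b / (2 * d)) * f ≤ b / 2 * f :=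
          mul_le_mul_of_nonneg_right (min_le_left _ _) (by nlinarith)
      _ ≤ g := by linarith
  · rcases le_or_gt f 0 with hf0 | hf0
    · nlinarith [mul_nonpos_of_nonneg_of_nonpos (le_min (by positivity) (by positivity) :
        0 ≤ min (b / 2) (a * b / (2 * d))) hf0]
    · calc min (b / 2) (a * b / (2 * d)) * f ≤ a * b / (2 * d) * f :=
          mul_le_mul_of_nonneg_right (min_le_right _ _) hf0.le
        _ ≤ a := by rw [div_mul_eq_mul_div, div_le_iff₀ (by positivity)]; nlinarith
        _ ≤ g := hag

lemma exists_mul_le_log_of_le {c q : ℝ} (hc : 0 < c) :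
    ∃ C > 0, C ≤ 1 ∧ ∀ l Z : ℝ, 1 + c * l ^ 2 ≤ Z → exp ((|l| / 2) ^ q) / 2 ≤ Z →
      C * (if |l| ≤ 2 then l ^ 2 else |l| ^ q) ≤ log Z := by
  set a := log (1 + 4 * c)
  set b : ℝ := (2 ^ q)⁻¹
  have ha : 0 < a := log_pos (by linarith)
  have hb : 0 < b := by positivity
  refine ⟨min (c / (1 + 4 * c)) (min (b / 2) (a * b / (2 * log 2))), by positivity,
    (min_le_left _ _).trans ((div_le_one (by positivity)).2 (by linarith)), fun l Z h1 h2 => ?_⟩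
  have hZ : 0 < Z := by nlinarith
  have hlog : log (1 + c * l ^ 2) ≤ log Z := log_le_log (by positivity) h1
  split_ifs with hl
  · have hl2 : l ^ 2 ≤ 4 := by nlinarith [sq_abs l, abs_nonneg l]
    have hfrac : c * l ^ 2 / (1 + c * l ^ 2) ≤ log (1 + c * l ^ 2) := by
      have hpos : 0 < 1 + c * l ^ 2 := by positivity
      convert one_sub_inv_le_log_of_pos hpos using 1
      field_simp; ring
    calc _ ≤ c / (1 + 4 * c) * l ^ 2 := mul_le_mul_of_nonneg_right (min_le_left _ _) (sq_nonneg l)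
      _ ≤ c * l ^ 2 / (1 + c * l ^ 2) := by
          rw [div_mul_eq_mul_div]
          exact div_le_div_of_nonneg_left (by positivity) (by positivity) (by nlinarith)
      _ ≤ log Z := hfrac.trans hlog
  · have hl2 : 4 < l ^ 2 := by nlinarith [sq_abs l, abs_nonneg l]
    have hag : a ≤ log Z := (log_le_log (by linarith) (by nlinarith)).trans hlog
    have hbg : b * |l| ^ q - log 2 ≤ log Z := by
      have := log_le_log (by positivity) h2
      rwa [log_div (exp_ne_zero _) two_ne_zero, log_exp, div_rpow (abs_nonneg l) zero_le_two,
        div_eq_inv_mul] at this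
    exact (mul_le_mul_of_nonneg_right (min_le_right _ _) (by positivity)).trans
      (min_mul_le_of_le_of_mul_sub_le ha hb (log_pos one_lt_two) hag hbg)

lemma exists_log_le_mul_of_le {q A : ℝ} (K : ℝ) (hq : 0 ≤ q) (hA : 0 ≤ A) :
    ∃ C ≥ 1, ∀ l Z : ℝ, 0 < Z → (|l| ≤ 2 → Z ≤ 1 + K * l ^ 2) → Z ≤ 2 * exp (A * |l| ^ q) →
      log Z ≤ C * (if |l| ≤ 2 then l ^ 2 else |l| ^ q) := by
  refine ⟨max K (A + 1), le_max_of_le_right (by linarith), fun l Z hZ h1 h2 => ?_⟩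
  split_ifs with hl
  · calc log Z ≤ Z - 1 := log_le_sub_one_of_pos hZ
      _ ≤ K * l ^ 2 := by linarith [h1 hl]
      _ ≤ _ := mul_le_mul_of_nonneg_right (le_max_left _ _) (sq_nonneg l)
  · have hf : 1 ≤ |l| ^ q := one_le_rpow (by linarith) hq
    have hlog2 : log 2 ≤ 1 := by linarith [log_le_sub_one_of_pos two_pos]
    calc log Z ≤ log 2 + A * |l| ^ q := by
          simpa [log_mul, exp_ne_zero] using log_le_log hZ h2
      _ ≤ (A + 1) * |l| ^ q := by linarith
      _ ≤ _ := mul_le_mul_of_nonneg_right (le_max_right _ _) (by linarith)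

end Real

section

variable {Ω : Type*} [MeasurableSpace Ω] {μ : Measure Ω} {ξ : Ω → ℝ} {m : ℝ}

section Tail

variable (hm : 0 < m) (htail : ∀ x : ℝ, 0 ≤ x → (μ {ω | x < |ξ ω|}).toReal = exp (-(x ^ m)))
include hm htail

lemma measure_lt_exp_abs_rpow_div_two [IsFiniteMeasure μ] {t : ℝ} (ht : 1 < t) :
    μ {ω | t < exp (|ξ ω| ^ m / 2)} = ENNReal.ofReal (t ^ (-2 : ℝ)) := by
  have ht0 : 0 < t := by linarith
  have hlog : 0 ≤ 2 * log t := by linarith [log_pos ht]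
  set r := (2 * log t) ^ m⁻¹
  have hset : {ω | t < exp (|ξ ω| ^ m / 2)} = {ω | r < |ξ ω|} := by
    ext ω
    rw [mem_ofPred_eq, mem_ofPred_eq, ← log_lt_iff_lt_exp ht0,
      rpow_inv_lt_iff_of_pos hlog (abs_nonneg _) hm]
    constructor <;> intro h <;> linarith
  have hrm : r ^ m = 2 * log t := by
    rw [← rpow_mul hlog, inv_mul_cancel₀ hm.ne', rpow_one]
  rw [hset, ← ENNReal.ofReal_toReal (measure_ne_top μ _), htail r (by positivity), hrm,
    rpow_def_of_pos ht0]
  congr 2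
  ring

variable [IsProbabilityMeasure μ] (hξ : Measurable ξ)
include hξ

lemma lintegral_exp_abs_rpow_div_two_le :
    ∫⁻ ω, ENNReal.ofReal (exp (|ξ ω| ^ m / 2)) ∂μ ≤ 2 := by
  have hY : Measurable fun ω => exp (|ξ ω| ^ m / 2) := ((hξ.abs.pow_const m).div_const 2).exp
  rw [lintegral_eq_lintegral_meas_lt μ (ae_of_all _ fun ω => (exp_pos _).le) hY.aemeasurable,
    ← Ioc_union_Ioi_eq_Ioi zero_le_one,
    lintegral_union measurableSet_Ioi (Ioc_disjoint_Ioi le_rfl)]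
  have hnear : ∫⁻ t in Ioc (0 : ℝ) 1, μ {ω | t < exp (|ξ ω| ^ m / 2)} ≤ 1 :=
    calc _ ≤ ∫⁻ _ in Ioc (0 : ℝ) 1, 1 := lintegral_mono fun _ => prob_le_one
      _ = 1 := by simp
  have hfar : ∫⁻ t in Ioi (1 : ℝ), μ {ω | t < exp (|ξ ω| ^ m / 2)} = 1 := by
    rw [setLIntegral_congr_fun measurableSet_Ioi
        fun t ht => measure_lt_exp_abs_rpow_div_two hm htail ht,
      ← ofReal_integral_eq_lintegral_ofReal (integrableOn_Ioi_rpow_of_lt (by norm_num) one_pos)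
        ((ae_restrict_mem measurableSet_Ioi).mono fun t ht => rpow_nonneg (by linarith [ht.out]) _),
      integral_Ioi_rpow_of_lt (by norm_num) one_pos]
    norm_num
  rw [hfar]
  calc _ ≤ (1 : ENNReal) + 1 := add_le_add_left hnear 1
    _ = 2 := one_add_one_eq_two

lemma integrable_exp_abs_rpow_div_two : Integrable (fun ω => exp (|ξ ω| ^ m / 2)) μ := by
  refine ⟨((hξ.abs.pow_const m).div_const 2).exp.aestronglyMeasurable, ?_⟩
  rw [hasFiniteIntegral_iff_ofReal (ae_of_all _ fun ω => (exp_pos _).le)]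
  exact (lintegral_exp_abs_rpow_div_two_le hm htail hξ).trans_lt (by norm_num)

lemma integral_exp_abs_rpow_div_two_le : ∫ ω, exp (|ξ ω| ^ m / 2) ∂μ ≤ 2 := by
  rw [integral_eq_lintegral_of_nonneg_ae (ae_of_all _ fun ω => (exp_pos _).le)
    ((hξ.abs.pow_const m).div_const 2).exp.aestronglyMeasurable]
  exact ENNReal.toReal_le_of_le_ofReal zero_le_two
    ((lintegral_exp_abs_rpow_div_two_le hm htail hξ).trans_eq (by norm_num))

variable {A q : ℝ} (hyoung : ∀ a b : ℝ, 0 ≤ a → 0 ≤ b → a * b ≤ A * a ^ q + b ^ m / 2)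
include hyoung

lemma integrable_exp_mul (l : ℝ) : Integrable (fun ω => exp (l * ξ ω)) μ :=
  ((integrable_exp_abs_rpow_div_two hm htail hξ).const_mul (exp (A * |l| ^ q))).mono'
    (measurable_const.mul hξ).exp.aestronglyMeasurable
    (ae_of_all _ fun ω => by
      rw [norm_of_nonneg (exp_pos _).le]; exact exp_mul_le_of_young hyoung l (ξ ω))

lemma integral_exp_mul_le (l : ℝ) : ∫ ω, exp (l * ξ ω) ∂μ ≤ 2 * exp (A * |l| ^ q) :=
  calc ∫ ω, exp (l * ξ ω) ∂μ ≤ ∫ ω, exp (A * |l| ^ q) * exp (|ξ ω| ^ m / 2) ∂μ :=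
        integral_mono (integrable_exp_mul hm htail hξ hyoung l)
          ((integrable_exp_abs_rpow_div_two hm htail hξ).const_mul _)
          fun ω => exp_mul_le_of_young hyoung l (ξ ω)
    _ = exp (A * |l| ^ q) * ∫ ω, exp (|ξ ω| ^ m / 2) ∂μ := integral_const_mul _ _
    _ ≤ exp (A * |l| ^ q) * 2 := by gcongr; exact integral_exp_abs_rpow_div_two_le hm htail hξ
    _ = _ := mul_comm _ _

lemma integral_cosh_mul_le {l : ℝ} (hl : |l| ≤ 2) :
    ∫ ω, cosh (l * ξ ω) ∂μ ≤ 1 + exp (A * 4 ^ q) * l ^ 2 := by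
  have hY := integrable_exp_abs_rpow_div_two hm htail hξ
  calc ∫ ω, cosh (l * ξ ω) ∂μ
      ≤ ∫ ω, (1 + l ^ 2 / 2 * (exp (A * 4 ^ q) * exp (|ξ ω| ^ m / 2))) ∂μ :=
        integral_mono_of_nonneg (ae_of_all _ fun _ => (cosh_pos _).le)
          ((integrable_const 1).add ((hY.const_mul _).const_mul _))
          (ae_of_all _ fun ω => cosh_mul_le_of_young hyoung hl (ξ ω))
    _ = 1 + l ^ 2 / 2 * (exp (A * 4 ^ q) * ∫ ω, exp (|ξ ω| ^ m / 2) ∂μ) := by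
        rw [integral_add (integrable_const 1) ((hY.const_mul _).const_mul _), integral_const_mul,
          integral_const_mul]
        simp
    _ ≤ 1 + l ^ 2 / 2 * (exp (A * 4 ^ q) * 2) := by
        gcongr; exact integral_exp_abs_rpow_div_two_le hm htail hξ
    _ = _ := by ring

end Tail

lemma integrable_cosh_mul (hint : ∀ l : ℝ, Integrable (fun ω => exp (l * ξ ω)) μ) (l : ℝ) :
    Integrable (fun ω => cosh (l * ξ ω)) μ := by
  simp_rw [cosh_eq]
  exact ((hint l).add (by simpa using hint (-l))).div_const 2

lemma integral_exp_mul_eq_integral_cosh_mul (hξ : Measurable ξ)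
    (hsymm : μ.map ξ = μ.map (fun ω => -ξ ω))
    (hint : ∀ l : ℝ, Integrable (fun ω => exp (l * ξ ω)) μ) (l : ℝ) :
    ∫ ω, exp (l * ξ ω) ∂μ = ∫ ω, cosh (l * ξ ω) ∂μ := by
  have hident : IdentDistrib ξ (fun ω => -ξ ω) μ μ := ⟨hξ.aemeasurable, hξ.neg.aemeasurable, hsymm⟩
  have hneg : ∫ ω, exp (l * ξ ω) ∂μ = ∫ ω, exp (-(l * ξ ω)) ∂μ := by
    simpa using (hident.comp (measurable_const.mul measurable_id).exp).integral_eq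
  simp_rw [cosh_eq]
  rw [integral_div, integral_add (hint l) (by simpa using hint (-l)), ← hneg]
  ring

lemma integrable_min_sq_one [IsFiniteMeasure μ] (hξ : Measurable ξ) :
    Integrable (fun ω => min (ξ ω ^ 2) 1) μ :=
  (integrable_const 1).mono' ((hξ.pow_const 2).min measurable_const).aestronglyMeasurable
    (ae_of_all _ fun ω => by
      rw [norm_of_nonneg (le_min (sq_nonneg _) zero_le_one)]; exact min_le_right _ _)

lemma integral_min_sq_one_pos [IsFiniteMeasure μ] (hξ : Measurable ξ)
    (h : μ {ω | ξ ω ≠ 0} ≠ 0) : 0 < ∫ ω, min (ξ ω ^ 2) 1 ∂μ := by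
  rw [integral_pos_iff_support_of_nonneg (fun ω => le_min (sq_nonneg _) zero_le_one)
    (integrable_min_sq_one hξ)]
  convert pos_iff_ne_zero.2 h using 3
  ext ω
  by_cases hω : ξ ω = 0
  · simp [hω]
  · simpa [hω] using (lt_min (sq_pos_of_ne_zero hω) one_pos).ne'

lemma one_add_mul_sq_le_integral_cosh_mul [IsProbabilityMeasure μ] (hξ : Measurable ξ) {l : ℝ}
    (hint : Integrable (fun ω => cosh (l * ξ ω)) μ) :
    1 + (∫ ω, min (ξ ω ^ 2) 1 ∂μ) / 2 * l ^ 2 ≤ ∫ ω, cosh (l * ξ ω) ∂μ := by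
  have hT := integrable_min_sq_one (μ := μ) hξ
  calc 1 + (∫ ω, min (ξ ω ^ 2) 1 ∂μ) / 2 * l ^ 2
      = ∫ ω, (1 + l ^ 2 / 2 * min (ξ ω ^ 2) 1) ∂μ := by
        rw [integral_add (integrable_const 1) (hT.const_mul _), integral_const_mul]
        simp only [integral_const, probReal_univ, smul_eq_mul, mul_one, add_right_inj]
        ring
    _ ≤ ∫ ω, cosh (l * ξ ω) ∂μ := integral_mono ((integrable_const 1).add (hT.const_mul _)) hint
        fun ω => by
          have := one_add_sq_div_two_le_cosh (l * ξ ω)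
          have := min_le_left (ξ ω ^ 2) 1
          nlinarith [sq_nonneg l]

lemma exp_mul_sub_rpow_div_two_le_integral_cosh_mul [IsFiniteMeasure μ]
    (htail : ∀ x : ℝ, 0 ≤ x → (μ {ω | x < |ξ ω|}).toReal = exp (-(x ^ m))) {l : ℝ}
    (hint : Integrable (fun ω => cosh (l * ξ ω)) μ) {x : ℝ} (hx : 0 ≤ x) :
    exp (|l| * x - x ^ m) / 2 ≤ ∫ ω, cosh (l * ξ ω) ∂μ := by
  have hsub : {ω | x < |ξ ω|} ⊆ {ω | cosh (|l| * x) ≤ cosh (l * ξ ω)} := fun ω hω =>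
    cosh_le_cosh.2 (by
      rw [abs_mul l, abs_of_nonneg (by positivity : 0 ≤ |l| * x)]
      exact mul_le_mul_of_nonneg_left hω.out.le (abs_nonneg l))
  calc exp (|l| * x - x ^ m) / 2 = exp (|l| * x) / 2 * exp (-(x ^ m)) := by
        rw [sub_eq_add_neg, exp_add]; ring
    _ ≤ cosh (|l| * x) * μ.real {ω | x < |ξ ω|} := by
        rw [measureReal_def, htail x hx, cosh_eq]
        gcongr
        linarith [exp_pos (-(|l| * x))]
    _ ≤ cosh (|l| * x) * μ.real {ω | cosh (|l| * x) ≤ cosh (l * ξ ω)} :=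
        mul_le_mul_of_nonneg_left (measureReal_mono hsub) (cosh_pos _).le
    _ ≤ ∫ ω, cosh (l * ξ ω) ∂μ :=
        mul_meas_ge_le_integral_of_nonneg (ae_of_all _ fun _ => (cosh_pos _).le) hint _

end

/-- Two-sided estimate of the cumulant generating function of a symmetric Weibull-type
random variable with tail `P(|ξ| > x) = exp(-x^m)`, `m > 1`: there are constants
`0 < C₁ ≤ C₂` and `C₃ > 0` with `C₁ ψ(λ) ≤ φ(λ) ≤ C₂ ψ(λ)` for all `λ`, where
`ψ(λ) = λ²` for `|λ| ≤ 2` and `ψ(λ) = C₃ |λ|^{m/(m-1)}` for `|λ| > 2`. -/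
theorem stmt16
    {Ω : Type*} [MeasurableSpace Ω] (μ : Measure Ω) [IsProbabilityMeasure μ]
    (ξ : Ω → ℝ) (hξ : Measurable ξ) (m : ℝ) (hm : 1 < m)
    (hsymm : μ.map ξ = μ.map (fun ω => -ξ ω))
    (htail : ∀ x : ℝ, 0 ≤ x →
      (μ {ω | x < |ξ ω|}).toReal = Real.exp (-(x ^ m))) :
    ∃ C₁ C₂ C₃ : ℝ, 0 < C₁ ∧ C₁ ≤ C₂ ∧ 0 < C₃ ∧
      ∀ l : ℝ,
        C₁ * (if |l| ≤ 2 then l ^ 2 else C₃ * |l| ^ (m / (m - 1)))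
            ≤ Real.log (∫ ω, Real.exp (l * ξ ω) ∂μ) ∧
          Real.log (∫ ω, Real.exp (l * ξ ω) ∂μ)
            ≤ C₂ * (if |l| ≤ 2 then l ^ 2 else C₃ * |l| ^ (m / (m - 1))) := by
  have hm0 : 0 < m := by linarith
  obtain ⟨A, hA, hyoung⟩ := exists_mul_le_rpow_add_rpow
    ((holderConjugate_iff_eq_conjExponent hm).2 rfl) (half_pos one_pos)
  replace hyoung : ∀ a b : ℝ, 0 ≤ a → 0 ≤ b → a * b ≤ A * a ^ (m / (m - 1)) + b ^ m / 2 :=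
    fun a b ha hb => (hyoung a b ha hb).trans_eq (by ring)
  have hint := integrable_exp_mul hm0 htail hξ hyoung
  have hZ := integral_exp_mul_eq_integral_cosh_mul hξ hsymm hint
  have hξ0 : μ {ω | ξ ω ≠ 0} ≠ 0 := by
    have h := htail 0 le_rfl
    simp only [abs_pos, zero_rpow hm0.ne', neg_zero, exp_zero] at h
    exact fun h0 => by simp [h0] at h
  obtain ⟨C₁, hC₁, hC₁1, hlow⟩ := exists_mul_le_log_of_le (q := m / (m - 1))
    (half_pos (integral_min_sq_one_pos hξ hξ0))
  obtain ⟨C₂, hC₂, hup⟩ := exists_log_le_mul_of_le (q := m / (m - 1))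
    (exp (A * 4 ^ (m / (m - 1)))) (div_pos hm0 (sub_pos.2 hm)).le hA.le
  refine ⟨C₁, C₂, 1, hC₁, hC₁1.trans hC₂, one_pos, fun l => ?_⟩
  simp only [one_mul]
  refine ⟨hlow l _ ?_ ?_, hup l _ (integral_exp_pos (hint l)) ?_
    (integral_exp_mul_le hm0 htail hξ hyoung l)⟩
  · rw [hZ]
    exact one_add_mul_sq_le_integral_cosh_mul hξ (integrable_cosh_mul hint l)
  · rw [hZ, ← mul_sub_rpow_eq_rpow_div_sub_one hm (abs_nonneg l)]
    exact exp_mul_sub_rpow_div_two_le_integral_cosh_mul htail (integrable_cosh_mul hint l)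
      (by positivity)
  · exact fun hl => (hZ l).trans_le (integral_cosh_mul_le hm0 htail hξ hyoung hl)
end

section
/- Let ξ(i) be i.i.d. symmetric random variables with P(|ξ(i)| > x) = exp(-x^m), m > 1, and let η ~ Geometric on {1,2,…} with mean A ≥ 2, independent of {ξ(i)}. Set M = min(m, 2) (taking m ∈ (1,2] so M = m, say), and S = Σ_{i=1}^{η} ξ(i)/√A. Suppose the lower bound P(n^{-1/2} Σ_{i=1}^{n} ξ(i) > u) ≥ exp(-C₁ u^M) holds for all n ≥ 1 and u ≥ 2 (with C₁ depending only on m). Then for all sufficiently large x, P(S > x) ≥ C₆(m) exp(-C₇(m) x^{2M/(M+2)}). -/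
/-!
Keep only the term `η = n` of `P(S > x) = ∑ₙ P(η = n) P(Sₙ/√n > x √(A/n))`, with
`n ≈ A x^p` and `p = 2m/(m+2)`. Then `P(η = n) = A⁻¹ (1 - 1/A)^(n-1) ≥ A⁻¹ exp(-2 x^p)`,
while the threshold `u = x √(A/n)` satisfies `x^(2-p)/2 ≤ u² ≤ x^(2-p)`: so `u ≥ 2` for
large `x`, and `exp(-C₁ u^m) ≥ exp(-C₁ x^p)` because `(2 - p) m / 2 = p`. This `p` is the
exponent balancing the geometric cost `n / A` against the cost `(x² A / n)^(m/2)` of a large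
normalized sum.
-/

open MeasureTheory ProbabilityTheory Real Finset

lemma exp_neg_two_mul_le_one_sub {t : ℝ} (ht0 : 0 ≤ t) (ht : t ≤ 1 / 2) :
    exp (-(2 * t)) ≤ 1 - t := by
  have hinv : (1 - t)⁻¹ ≤ 1 + 2 * t := by
    rw [inv_le_iff_one_le_mul₀ (by linarith)]
    nlinarith
  have hlog : -(2 * t) ≤ log (1 - t) := by
    linarith [one_sub_inv_le_log_of_pos (x := 1 - t) (by linarith)]
  calc exp (-(2 * t)) ≤ exp (log (1 - t)) := exp_le_exp.2 hlog
    _ = 1 - t := exp_log (by linarith)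

lemma exp_neg_two_mul_le_one_sub_inv_pow {A t : ℝ} (hA : 2 ≤ A) {k : ℕ}
    (hk : (k : ℝ) ≤ A * t) :
    exp (-(2 * t)) ≤ (1 - 1 / A) ^ k := by
  have hkt : k * (1 / A) ≤ t := by
    rw [mul_one_div, div_le_iff₀ (by linarith)]
    linarith
  calc exp (-(2 * t)) ≤ exp (k * -(2 * (1 / A))) := by
        rw [exp_le_exp]
        linarith
    _ = exp (-(2 * (1 / A))) ^ k := exp_nat_mul _ _
    _ ≤ (1 - 1 / A) ^ k := by
        gcongr
        exact exp_neg_two_mul_le_one_sub (by positivity) (by gcongr)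

lemma exists_nat_pred_le_le_le_two_mul {y : ℝ} (hy : 1 ≤ y) :
    ∃ n : ℕ, 1 ≤ n ∧ ((n - 1 : ℕ) : ℝ) ≤ y ∧ y ≤ n ∧ (n : ℝ) ≤ 2 * y := by
  refine ⟨⌊y⌋₊ + 1, le_add_self, ?_, ?_, ?_⟩
  · simpa using Nat.floor_le (by linarith)
  · exact_mod_cast (Nat.lt_floor_add_one y).le
  · push_cast
    linarith [Nat.floor_le (by linarith : 0 ≤ y)]

lemma two_le_sqrt_sq_mul_div {p A x N : ℝ} (hx : 0 < x) (hN0 : 0 < N)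
    (hN : N ≤ 2 * A * x ^ p) (h8 : 8 ≤ x ^ (2 - p)) :
    2 ≤ √(x ^ 2 * A / N) := by
  have hsplit : x ^ (2 - p) * x ^ p = x ^ 2 := by
    rw [← rpow_add hx, sub_add_cancel, rpow_two]
  have h4 : 4 ≤ x ^ 2 * A / N := by
    rw [le_div_iff₀ hN0, ← hsplit]
    nlinarith [rpow_pos_of_pos hx p]
  calc (2 : ℝ) = √4 := by rw [show (4 : ℝ) = 2 ^ 2 by norm_num, sqrt_sq zero_le_two]
    _ ≤ √(x ^ 2 * A / N) := sqrt_le_sqrt h4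

lemma sqrt_sq_mul_div_rpow_le {m p A x N : ℝ} (hm : 0 ≤ m) (hpm : (2 - p) * m = 2 * p)
    (hA : 0 < A) (hx : 0 < x) (hN : A * x ^ p ≤ N) :
    √(x ^ 2 * A / N) ^ m ≤ x ^ p := by
  have hxp := rpow_pos_of_pos hx p
  have hN0 : 0 < N := lt_of_lt_of_le (by positivity) hN
  have hle : x ^ 2 * A / N ≤ x ^ (2 - p) := by
    rw [div_le_iff₀ hN0, rpow_sub hx, rpow_two]
    calc x ^ 2 * A = x ^ 2 / x ^ p * (A * x ^ p) := by field_simp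
      _ ≤ x ^ 2 / x ^ p * N := by gcongr
  calc √(x ^ 2 * A / N) ^ m = (x ^ 2 * A / N) ^ (m / 2) := by
        rw [sqrt_eq_rpow, ← rpow_mul (by positivity)]
        ring_nf
    _ ≤ (x ^ (2 - p)) ^ (m / 2) := by gcongr
    _ = x ^ p := by
        rw [← rpow_mul hx.le]
        congr 1
        linarith

lemma two_mul_div_add_two_lt_two {m : ℝ} (hm : 0 ≤ m) : 2 * m / (m + 2) < 2 := by
  rw [div_lt_iff₀ (by linarith)]
  linarith

lemma two_sub_two_mul_div_add_two_mul {m : ℝ} (hm : 0 ≤ m) :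
    (2 - 2 * m / (m + 2)) * m = 2 * (2 * m / (m + 2)) := by
  field_simp
  ring

lemma toReal_mul_le_toReal_measure_randomSum {Ω : Type*} [MeasurableSpace Ω] {μ : Measure Ω}
    [IsFiniteMeasure μ] {ξ : ℕ → Ω → ℝ} {η : Ω → ℕ}
    (hind : IndepFun η (fun ω i => ξ i ω) μ)
    (n : ℕ) {a b u x : ℝ} (ha : 0 < a) (hb : 0 < b) (hux : u * b = x * a) :
    (μ {ω | η ω = n}).toReal * (μ {ω | u < (∑ i ∈ range n, ξ i ω) / b}).toReal
      ≤ (μ {ω | x < (∑ i ∈ range (η ω), ξ i ω) / a}).toReal := by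
  have hT : MeasurableSet {f : ℕ → ℝ | u < (∑ i ∈ range n, f i) / b} :=
    measurableSet_lt measurable_const
      ((Finset.measurable_sum _ fun i _ => measurable_pi_apply i).div_const _)
  rw [← ENNReal.toReal_mul]
  refine ENNReal.toReal_mono (measure_ne_top _ _) <|
    (hind.measure_inter_preimage_eq_mul _ _ (measurableSet_singleton n) hT).symm.trans_le
      (measure_mono ?_)
  rintro ω ⟨hη, hS⟩
  change η ω = n at hη
  change u < (∑ i ∈ range n, ξ i ω) / b at hS
  change x < (∑ i ∈ range (η ω), ξ i ω) / a
  rw [hη, lt_div_iff₀ ha, ← hux]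
  rwa [lt_div_iff₀ hb] at hS

theorem stmt17_general
    {Ω : Type*} [MeasurableSpace Ω] (μ : Measure Ω) [IsProbabilityMeasure μ]
    (ξ : ℕ → Ω → ℝ) (η : Ω → ℕ) (m A C₁ : ℝ)
    (hm : 1 < m) (hA : 2 ≤ A) (hC₁ : 0 < C₁)
    (hgeom : ∀ n : ℕ, 1 ≤ n →
      μ {ω | η ω = n} = ENNReal.ofReal (A⁻¹ * (1 - 1 / A) ^ (n - 1)))
    (hηindep : IndepFun η (fun ω i => ξ i ω) μ)
    (hlower : ∀ n : ℕ, 1 ≤ n → ∀ u : ℝ, 2 ≤ u →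
      Real.exp (-C₁ * u ^ m)
        ≤ (μ {ω | u < (∑ i ∈ Finset.range n, ξ i ω) / Real.sqrt n}).toReal) :
    ∃ C₆ C₇ : ℝ, 0 < C₆ ∧ 0 < C₇ ∧ ∃ x₀ : ℝ, ∀ x : ℝ, x₀ ≤ x →
      C₆ * Real.exp (-C₇ * x ^ (2 * m / (m + 2)))
        ≤ (μ {ω | x < (∑ i ∈ Finset.range (η ω), ξ i ω) / Real.sqrt A}).toReal := by
  have hm0 : 0 ≤ m := by linarith
  have hp2 := sub_pos.2 (two_mul_div_add_two_lt_two hm0)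
  have hpm := two_sub_two_mul_div_add_two_mul hm0
  set p := 2 * m / (m + 2)
  have hA0 : 0 < A := by linarith
  refine ⟨A⁻¹, 2 + C₁, by positivity, by positivity, 8 ^ (2 - p)⁻¹, fun x hx => ?_⟩
  have hx0 : 0 < x := lt_of_lt_of_le (by positivity) hx
  have hx8 : 8 ≤ x ^ (2 - p) := (rpow_inv_le_iff_of_pos (by norm_num) hx0.le hp2).1 hx
  have hx1 : 1 ≤ x := (one_le_rpow (by norm_num) (inv_nonneg.2 hp2.le)).trans hx
  have hxp : 1 ≤ x ^ p := one_le_rpow hx1 (by positivity)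
  obtain ⟨n, hn, hnA, hAn, hn2⟩ :=
    exists_nat_pred_le_le_le_two_mul (y := A * x ^ p) (by nlinarith)
  have hn0 : (0 : ℝ) < n := by exact_mod_cast hn
  set u := √(x ^ 2 * A / n)
  have hu : u * √n = x * √A := by
    rw [← sqrt_mul (by positivity), div_mul_cancel₀ _ hn0.ne', sqrt_mul (by positivity),
      sqrt_sq hx0.le]
  have hA1 : 0 ≤ 1 - 1 / A := by
    rw [sub_nonneg, div_le_one hA0]
    linarith
  calc A⁻¹ * exp (-(2 + C₁) * x ^ p) = A⁻¹ * exp (-(2 * x ^ p)) * exp (-C₁ * x ^ p) := by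
        rw [mul_assoc, ← exp_add]
        ring_nf
    _ ≤ A⁻¹ * (1 - 1 / A) ^ (n - 1) * exp (-C₁ * u ^ m) := by
        gcongr A⁻¹ * ?_ * exp ?_
        · exact exp_neg_two_mul_le_one_sub_inv_pow hA hnA
        · exact mul_le_mul_of_nonpos_left (sqrt_sq_mul_div_rpow_le hm0 hpm hA0 hx0 hAn)
            (by linarith)
    _ ≤ (μ {ω | η ω = n}).toReal
          * (μ {ω | u < (∑ i ∈ range n, ξ i ω) / √n}).toReal := by
        rw [hgeom n hn, ENNReal.toReal_ofReal (by positivity)]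
        gcongr
        exact hlower n hn u (two_le_sqrt_sq_mul_div hx0 hn0 (by linarith) hx8)
    _ ≤ _ :=
        toReal_mul_le_toReal_measure_randomSum hηindep n (sqrt_pos.2 hA0) (sqrt_pos.2 hn0) hu

/-- Theorem 2 (case `r = 0`): lower bound for the tail of a geometric random sum of
i.i.d. symmetric Weibull-type variables: `P(S > x) ≥ C₆ exp(-C₇ x^{2M/(M+2)})`
for all sufficiently large `x`, where `M = m ∈ (1,2]`. -/
theorem stmt17
    {Ω : Type*} [MeasurableSpace Ω] (μ : Measure Ω) [IsProbabilityMeasure μ]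
    (ξ : ℕ → Ω → ℝ) (η : Ω → ℕ) (m A C₁ : ℝ)
    (hm : 1 < m) (hm2 : m ≤ 2) (hA : 2 ≤ A) (hC₁ : 0 < C₁)
    (hξmeas : ∀ i, Measurable (ξ i))
    (hηmeas : Measurable η)
    (hindep : iIndepFun ξ μ)
    (hident : ∀ i, IdentDistrib (ξ i) (ξ 0) μ μ)
    (hsymm : μ.map (ξ 0) = μ.map (fun ω => -ξ 0 ω))
    (htail : ∀ i, ∀ x : ℝ, 0 ≤ x →
      (μ {ω | x < |ξ i ω|}).toReal = Real.exp (-(x ^ m)))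
    (hη1 : ∀ ω, 1 ≤ η ω)
    (hgeom : ∀ n : ℕ, 1 ≤ n →
      μ {ω | η ω = n} = ENNReal.ofReal (A⁻¹ * (1 - 1 / A) ^ (n - 1)))
    (hηindep : IndepFun η (fun ω i => ξ i ω) μ)
    (hlower : ∀ n : ℕ, 1 ≤ n → ∀ u : ℝ, 2 ≤ u →
      Real.exp (-C₁ * u ^ m)
        ≤ (μ {ω | u < (∑ i ∈ Finset.range n, ξ i ω) / Real.sqrt n}).toReal) :
    ∃ C₆ C₇ : ℝ, 0 < C₆ ∧ 0 < C₇ ∧ ∃ x₀ : ℝ, ∀ x : ℝ, x₀ ≤ x →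
      C₆ * Real.exp (-C₇ * x ^ (2 * m / (m + 2)))
        ≤ (μ {ω | x < (∑ i ∈ Finset.range (η ω), ξ i ω) / Real.sqrt A}).toReal :=
  stmt17_general μ ξ η m A C₁ hm hA hC₁ hgeom hηindep hlower
end

section
/- For M > 0, L ∈ ℝ, constants c₁, c₂ > 0, and x → ∞, the maximizer N₁(x) over positive integers n ≤ x² of the expression h(n) = n - n log n - c₂ x^M n^{-M/2} (log(c₁ + x/√n))^L satisfies N₁(x) ≍ C(M,L) x^{2M/(M+2)} (log x)^{(2L-2)/(M+2)}; that is, there exist constants 0 < k₁ ≤ k₂ and x₀ such that for all x ≥ x₀, k₁ x^{2M/(M+2)}(log x)^{(2L-2)/(M+2)} ≤ N₁(x) ≤ k₂ x^{2M/(M+2)}(log x)^{(2L-2)/(M+2)}. -/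
open Real Filter

lemma aux_tendsto {c : ℝ} (d : ℝ) (hc : 0 < c) :
    Tendsto (fun x : ℝ => x ^ c * Real.log x ^ d) atTop atTop := by
  rcases le_or_gt 0 d with hd | hd
  · apply tendsto_atTop_mono' _ _ (tendsto_rpow_atTop hc)
    filter_upwards [tendsto_log_atTop.eventually_ge_atTop 1, eventually_ge_atTop (0:ℝ)]
      with x hlx hx
    nth_rewrite 1 [← mul_one (x ^ c)]
    exact mul_le_mul_of_nonneg_left (Real.one_le_rpow hlx hd) (Real.rpow_nonneg hx c)
  · apply tendsto_atTop_mono' _ _ (tendsto_rpow_atTop (show (0:ℝ) < c/2 by linarith))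
    have hε : (0:ℝ) < c / (2 * (-d)) := by
      apply div_pos hc; nlinarith
    have hlo := (isLittleO_log_rpow_atTop hε).bound one_pos
    filter_upwards [hlo, tendsto_log_atTop.eventually_ge_atTop 1, eventually_ge_atTop (1:ℝ)]
      with x hb hlx hx1
    have hx0 : (0:ℝ) < x := by linarith
    have hle : Real.log x ≤ x ^ (c / (2 * (-d))) := by
      have h1 : |Real.log x| ≤ 1 * |x ^ (c / (2 * (-d)))| := by simpa [Real.norm_eq_abs] using hb
      calc Real.log x ≤ |Real.log x| := le_abs_self _
        _ ≤ |x ^ (c / (2 * (-d)))| := by linarith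
        _ = x ^ (c / (2 * (-d))) := abs_of_nonneg (Real.rpow_nonneg hx0.le _)
    have h2 : (x ^ (c / (2 * (-d)))) ^ d ≤ Real.log x ^ d :=
      Real.rpow_le_rpow_of_nonpos (by linarith) hle hd.le
    have h3 : (x ^ (c / (2 * (-d)))) ^ d = x ^ (-(c/2)) := by
      rw [← Real.rpow_mul hx0.le]
      congr 1
      field_simp [hd.ne]
    have h4 : x ^ (c/2) = x ^ c * x ^ (-(c/2)) := by
      rw [← Real.rpow_add hx0]; ring_nf
    calc x ^ (c/2) = x ^ c * x ^ (-(c/2)) := h4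
      _ ≤ x ^ c * Real.log x ^ d := by
          apply mul_le_mul_of_nonneg_left _ (Real.rpow_nonneg hx0.le c)
          rw [← h3]; exact h2

lemma aux_ev {α γ : ℝ} (β δ c : ℝ) (h : α < γ) :
    ∀ᶠ x : ℝ in atTop, c * (x ^ α * Real.log x ^ β) ≤ x ^ γ * Real.log x ^ δ := by
  filter_upwards [(aux_tendsto (δ - β) (show (0:ℝ) < γ - α by linarith)).eventually_ge_atTop c,
    eventually_gt_atTop (0:ℝ), tendsto_log_atTop.eventually_gt_atTop 0] with x hge hx hlx
  have h1 : x ^ γ = x ^ (γ - α) * x ^ α := by rw [← Real.rpow_add hx]; ring_nf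
  have h2 : Real.log x ^ δ = Real.log x ^ (δ - β) * Real.log x ^ β := by
    rw [← Real.rpow_add hlx]; ring_nf
  calc c * (x ^ α * Real.log x ^ β)
      ≤ (x ^ (γ - α) * Real.log x ^ (δ - β)) * (x ^ α * Real.log x ^ β) :=
        mul_le_mul_of_nonneg_right hge (by positivity)
    _ = x ^ γ * Real.log x ^ δ := by rw [h1, h2]; ring

lemma aux_bracket {s t u : ℝ} (L : ℝ) (hs : 0 < s) (hst : s ≤ t) (htu : t ≤ u) :
    min (s ^ L) (u ^ L) ≤ t ^ L ∧ t ^ L ≤ max (s ^ L) (u ^ L) := by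
  rcases le_or_gt 0 L with hL | hL
  · exact ⟨(min_le_left _ _).trans (Real.rpow_le_rpow hs.le hst hL),
      (Real.rpow_le_rpow (by linarith) htu hL).trans (le_max_right _ _)⟩
  · exact ⟨(min_le_right _ _).trans (Real.rpow_le_rpow_of_nonpos (by linarith) htu hL.le),
      (Real.rpow_le_rpow_of_nonpos hs hst hL.le).trans (le_max_left _ _)⟩

set_option maxHeartbeats 1000000 in
/-- Saddle-point location in Example 2: any maximizer `n = N₁(x)` over integers
`1 ≤ n ≤ x²` of `h(n) = n - n log n - c₂ x^M n^{-M/2} (log(c₁ + x/√n))^L` satisfies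
`N₁(x) ≍ x^{2M/(M+2)} (log x)^{(2L-2)/(M+2)}` as `x → ∞`. -/
theorem stmt18 (M L c₁ c₂ : ℝ) (hM : 0 < M) (hc₁ : 0 < c₁) (hc₂ : 0 < c₂) :
    ∃ k₁ k₂ x₀ : ℝ, 0 < k₁ ∧ k₁ ≤ k₂ ∧ 2 ≤ x₀ ∧
      ∀ x : ℝ, x₀ ≤ x → ∀ n : ℕ, 1 ≤ n → (n : ℝ) ≤ x ^ 2 →
        (∀ k : ℕ, 1 ≤ k → (k : ℝ) ≤ x ^ 2 →
          (k : ℝ) - k * Real.log k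
              - c₂ * x ^ M * (k : ℝ) ^ (-(M / 2))
                  * Real.log (c₁ + x / Real.sqrt k) ^ L
            ≤ (n : ℝ) - n * Real.log n
                - c₂ * x ^ M * (n : ℝ) ^ (-(M / 2))
                    * Real.log (c₁ + x / Real.sqrt n) ^ L) →
        k₁ * x ^ (2 * M / (M + 2)) * Real.log x ^ ((2 * L - 2) / (M + 2)) ≤ (n : ℝ) ∧
          (n : ℝ) ≤ k₂ * x ^ (2 * M / (M + 2)) * Real.log x ^ ((2 * L - 2) / (M + 2)) := by
  have hM2 : (0:ℝ) < M + 2 := by linarith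
  set a : ℝ := 2 * M / (M + 2) with ha_def
  set b : ℝ := (2 * L - 2) / (M + 2) with hb_def
  have ha : 0 < a := by rw [ha_def]; positivity
  -- the constants
  set A : ℝ := max ((M + 2)⁻¹ ^ L) ((2:ℝ) ^ L) with hA_def
  set al : ℝ := min ((M + 2)⁻¹ ^ L) ((2:ℝ) ^ L) with hal_def
  have hA : 0 < A := lt_of_lt_of_le (Real.rpow_pos_of_pos two_pos L) (le_max_right _ _)
  have hal : 0 < al :=
    lt_min (Real.rpow_pos_of_pos (by positivity) L) (Real.rpow_pos_of_pos two_pos L)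
  set C : ℝ := 4 + c₂ * A with hC_def
  have hC : 0 < C := by positivity
  set K : ℝ := 2 * (M + 2) / M * (C + 1) with hK_def
  have hK1 : 1 ≤ K := by
    have h1 : (1:ℝ) ≤ 2 * (M + 2) / M := by rw [le_div_iff₀ hM]; linarith
    have h2 : (1:ℝ) * 1 ≤ 2 * (M + 2) / M * (C + 1) :=
      mul_le_mul h1 (by linarith) (by norm_num) (by linarith)
    rw [hK_def]; linarith only [h2]
  set y : ℝ := c₂ * al / (2 * (C + 1)) with hy_def
  have hy0 : 0 < y := by positivity
  set ε : ℝ := min 1 (y ^ (2 / M)) with hε_def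
  have hε0 : 0 < ε := lt_min one_pos (Real.rpow_pos_of_pos hy0 _)
  have hε1 : ε ≤ 1 := min_le_left _ _
  have hεkey : 2 * (C + 1) ≤ c₂ * al * ε ^ (-(M / 2)) := by
    have hεy : ε ≤ y ^ (2 / M) := min_le_right _ _
    have h1 : (y ^ (2 / M)) ^ (-(M / 2)) ≤ ε ^ (-(M / 2)) :=
      Real.rpow_le_rpow_of_nonpos hε0 hεy (by linarith)
    have h2 : (y ^ (2 / M)) ^ (-(M / 2)) = y⁻¹ := by
      rw [← Real.rpow_mul hy0.le]
      have : 2 / M * -(M / 2) = -1 := by field_simp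
      rw [this, Real.rpow_neg_one]
    have h3 : c₂ * al * y⁻¹ = 2 * (C + 1) := by
      rw [hy_def]
      field_simp
    have h4 := mul_le_mul_of_nonneg_left (h2 ▸ h1) (show (0:ℝ) ≤ c₂ * al by positivity)
    linarith only [h3, h4]
  -- eventual facts
  have hev : ∀ᶠ x : ℝ in Filter.atTop,
      (2 ≤ x ∧ c₁ ≤ x ∧ max 1 (2 * (M + 2) / M) ≤ Real.log x) ∧
      (1 ≤ x ^ a * Real.log x ^ b ∧
       2 * (x ^ a * Real.log x ^ b) ≤ x ^ (2 * (M + 1) / (M + 2)) ∧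
       x ^ (M / (M + 2)) ≤ x ^ a * Real.log x ^ b) := by
    have e1 := (aux_tendsto b ha).eventually_ge_atTop 1
    have e2 : a < 2 * (M + 1) / (M + 2) := by
      rw [ha_def, div_lt_div_iff₀ hM2 hM2]; nlinarith [hM, hM2]
    have e3 : M / (M + 2) < a := by
      rw [ha_def, div_lt_div_iff₀ hM2 hM2]; nlinarith [hM, hM2]
    have h2 := aux_ev b 0 2 e2
    have h3 := aux_ev 0 b 1 e3
    filter_upwards [e1, h2, h3, Filter.eventually_ge_atTop (2:ℝ),
      Filter.eventually_ge_atTop c₁,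
      Real.tendsto_log_atTop.eventually_ge_atTop (max 1 (2 * (M + 2) / M))]
      with x hx1 hx2 hx3 hx4 hx5 hx6
    refine ⟨⟨hx4, hx5, hx6⟩, hx1, ?_, ?_⟩
    · simpa [Real.rpow_zero] using hx2
    · simpa [Real.rpow_zero] using hx3
  obtain ⟨x₀', hx₀'⟩ := Filter.eventually_atTop.mp hev
  refine ⟨ε, K, max x₀' 2, hε0, hε1.trans hK1, le_max_right _ _, ?_⟩
  intro x hx n hn1 hnx2 hmax
  obtain ⟨⟨hx2, hc₁x, hlogmax⟩, hT1, hT2, hT3⟩ := hx₀' x (le_trans (le_max_left _ _) hx)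
  have hx0 : (0:ℝ) < x := by linarith only [hx2]
  have hx1 : (1:ℝ) < x := by linarith only [hx2]
  have hlx1 : 1 ≤ Real.log x := le_trans (le_max_left _ _) hlogmax
  have hlx0 : 0 < Real.log x := by linarith only [hlx1]
  set T : ℝ := x ^ a * Real.log x ^ b with hT_def
  have hT0 : 0 < T := by rw [hT_def]; positivity
  -- the comparison point N = ⌈T⌉₊
  set N : ℕ := ⌈T⌉₊ with hN_def
  have hN1 : 1 ≤ N := Nat.one_le_ceil_iff.mpr hT0
  have hTN : T ≤ (N:ℝ) := Nat.le_ceil T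
  have hN2T : (N:ℝ) ≤ 2 * T := by
    have h0 := Nat.ceil_lt_add_one hT0.le
    have h1 : (N:ℝ) < T + 1 := by exact_mod_cast h0
    linarith only [h1, hT1]
  have hexp2 : x ^ (2 * (M + 1) / (M + 2)) ≤ x ^ 2 := by
    rw [← Real.rpow_two]
    apply Real.rpow_le_rpow_of_exponent_le hx1.le
    rw [div_le_iff₀ hM2]; linarith only []
  have hNx2 : (N:ℝ) ≤ x ^ 2 := by
    calc (N:ℝ) ≤ 2 * T := hN2T
      _ ≤ x ^ (2 * (M + 1) / (M + 2)) := hT2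
      _ ≤ x ^ 2 := hexp2
  -- positivity of the log factor for any admissible m
  have hellpos : ∀ m : ℕ, 1 ≤ m → (m:ℝ) ≤ x ^ 2 → 0 < Real.log (c₁ + x / Real.sqrt m) := by
    intro m h1 h2
    have hsm1 : 1 ≤ Real.sqrt m := by
      rw [show (1:ℝ) = Real.sqrt 1 from Real.sqrt_one.symm]
      exact Real.sqrt_le_sqrt (by exact_mod_cast h1)
    have hsm0 : 0 < Real.sqrt m := by linarith only [hsm1]
    have hsx : Real.sqrt m ≤ x := by
      rw [show x = Real.sqrt (x ^ 2) from (Real.sqrt_sq hx0.le).symm]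
      exact Real.sqrt_le_sqrt h2
    have h3 : 1 ≤ x / Real.sqrt m := (one_le_div hsm0).mpr hsx
    exact Real.log_pos (by linarith only [h3, hc₁])
  -- log factor bounds for m ≤ 2T
  have hlbound : ∀ m : ℕ, 1 ≤ m → (m:ℝ) ≤ x ^ 2 → (m:ℝ) ≤ 2 * T →
      (M + 2)⁻¹ * Real.log x ≤ Real.log (c₁ + x / Real.sqrt m) ∧
      Real.log (c₁ + x / Real.sqrt m) ≤ 2 * Real.log x := by
    intro m h1 h2 h3
    have hsm1 : 1 ≤ Real.sqrt m := by
      rw [show (1:ℝ) = Real.sqrt 1 from Real.sqrt_one.symm]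
      exact Real.sqrt_le_sqrt (by exact_mod_cast h1)
    have hsm0 : 0 < Real.sqrt m := by linarith only [hsm1]
    constructor
    · have hsqT : Real.sqrt m ≤ x ^ ((M + 1) / (M + 2)) := by
        calc Real.sqrt m ≤ Real.sqrt (x ^ (2 * (M + 1) / (M + 2))) :=
              Real.sqrt_le_sqrt (h3.trans hT2)
          _ = x ^ ((M + 1) / (M + 2)) := by
              rw [Real.sqrt_eq_rpow, ← Real.rpow_mul hx0.le]
              congr 1
              ring
      have h4 : x ^ ((1:ℝ) / (M + 2)) ≤ x / Real.sqrt m := by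
        rw [le_div_iff₀ hsm0]
        calc x ^ ((1:ℝ) / (M + 2)) * Real.sqrt m
            ≤ x ^ ((1:ℝ) / (M + 2)) * x ^ ((M + 1) / (M + 2)) :=
              mul_le_mul_of_nonneg_left hsqT (Real.rpow_nonneg hx0.le _)
          _ = x ^ ((1:ℝ) / (M + 2) + (M + 1) / (M + 2)) := (Real.rpow_add hx0 _ _).symm
          _ = x ^ (1:ℝ) := by
              congr 1
              field_simp
              ring
          _ = x := Real.rpow_one x
      have h5 : x ^ ((1:ℝ) / (M + 2)) ≤ c₁ + x / Real.sqrt m := by linarith only [h4, hc₁]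
      have h6 := Real.log_le_log (Real.rpow_pos_of_pos hx0 _) h5
      rw [Real.log_rpow hx0] at h6
      calc (M + 2)⁻¹ * Real.log x = 1 / (M + 2) * Real.log x := by rw [one_div]
        _ ≤ Real.log (c₁ + x / Real.sqrt m) := h6
    · have h4 : x / Real.sqrt m ≤ x := by
        rw [div_le_iff₀ hsm0]
        have h0 := mul_le_mul_of_nonneg_left hsm1 hx0.le
        linarith only [h0]
      have h4b : 2 * x ≤ x * x := by
        have h0 := mul_le_mul_of_nonneg_right hx2 hx0.le
        linarith only [h0]
      have h5 : c₁ + x / Real.sqrt m ≤ x * x := by linarith only [h4, h4b, hc₁x]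
      have h6 := Real.log_le_log (by positivity) h5
      rw [Real.log_mul hx0.ne' hx0.ne'] at h6
      linarith only [h6]
  -- rpow-L bounds on the log factor
  have hpow : ∀ m : ℕ, 1 ≤ m → (m:ℝ) ≤ x ^ 2 → (m:ℝ) ≤ 2 * T →
      al * Real.log x ^ L ≤ Real.log (c₁ + x / Real.sqrt m) ^ L ∧
      Real.log (c₁ + x / Real.sqrt m) ^ L ≤ A * Real.log x ^ L := by
    intro m h1 h2 h3
    obtain ⟨hl, hu⟩ := hlbound m h1 h2 h3
    have hs0 : 0 < (M + 2)⁻¹ * Real.log x := by positivity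
    obtain ⟨hmin, hmax'⟩ := aux_bracket L hs0 hl hu
    have e1 : ((M + 2)⁻¹ * Real.log x) ^ L = (M + 2)⁻¹ ^ L * Real.log x ^ L :=
      Real.mul_rpow (by positivity) hlx0.le
    have e2 : ((2:ℝ) * Real.log x) ^ L = (2:ℝ) ^ L * Real.log x ^ L :=
      Real.mul_rpow (by norm_num) hlx0.le
    have hw : (0:ℝ) ≤ Real.log x ^ L := Real.rpow_nonneg hlx0.le L
    constructor
    · refine le_trans ?_ hmin
      rw [e1, e2, hal_def]
      exact le_min (mul_le_mul_of_nonneg_right (min_le_left _ _) hw)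
        (mul_le_mul_of_nonneg_right (min_le_right _ _) hw)
    · refine le_trans hmax' ?_
      rw [e1, e2, hA_def]
      exact max_le (mul_le_mul_of_nonneg_right (le_max_left _ _) hw)
        (mul_le_mul_of_nonneg_right (le_max_right _ _) hw)
  -- the key rpow identity
  have hkey : x ^ M * T ^ (-(M / 2)) * Real.log x ^ L = T * Real.log x := by
    have hsplit : T ^ (-(M / 2)) = x ^ (a * -(M / 2)) * Real.log x ^ (b * -(M / 2)) := by
      rw [hT_def, Real.mul_rpow (Real.rpow_nonneg hx0.le a) (Real.rpow_nonneg hlx0.le b),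
        ← Real.rpow_mul hx0.le, ← Real.rpow_mul hlx0.le]
    rw [hsplit]
    rw [show x ^ M * (x ^ (a * -(M / 2)) * Real.log x ^ (b * -(M / 2))) * Real.log x ^ L
        = (x ^ M * x ^ (a * -(M / 2))) * (Real.log x ^ (b * -(M / 2)) * Real.log x ^ L) by ring]
    rw [← Real.rpow_add hx0, ← Real.rpow_add hlx0]
    have ex : M + a * -(M / 2) = a := by
      rw [ha_def]; field_simp; ring
    have el : b * -(M / 2) + L = b + 1 := by
      rw [hb_def]; field_simp; ring
    rw [ex, el, Real.rpow_add hlx0, Real.rpow_one, hT_def]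
    ring
  -- set up the maximality inequality
  have hn0 : (0:ℝ) < n := by exact_mod_cast hn1
  set Pn : ℝ := c₂ * x ^ M * (n:ℝ) ^ (-(M / 2)) * Real.log (c₁ + x / Real.sqrt n) ^ L
    with hPn_def
  set PN : ℝ := c₂ * x ^ M * (N:ℝ) ^ (-(M / 2)) * Real.log (c₁ + x / Real.sqrt N) ^ L
    with hPN_def
  have hmaxN := hmax N hN1 hNx2
  rw [← hPN_def] at hmaxN
  have hPn0 : 0 < Pn := by
    rw [hPn_def]
    have h0 := hellpos n hn1 hnx2
    have h1 : 0 < Real.log (c₁ + x / Real.sqrt n) ^ L := Real.rpow_pos_of_pos h0 L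
    positivity
  have hPN0 : 0 < PN := by
    rw [hPN_def]
    have h0 := hellpos N hN1 hNx2
    have h1 : 0 < Real.log (c₁ + x / Real.sqrt N) ^ L := Real.rpow_pos_of_pos h0 L
    positivity
  -- bound on the right-hand side: g(N) + P(N) ≤ C * (T log x)
  have hgN : (N:ℝ) * Real.log N - N ≤ 4 * (T * Real.log x) := by
    have h1 : Real.log N ≤ 2 * Real.log x := by
      have h0 := Real.log_le_log (by exact_mod_cast hN1 : (0:ℝ) < N) hNx2
      rwa [Real.log_pow, Nat.cast_ofNat] at h0
    have h2 : 0 ≤ Real.log N := Real.log_natCast_nonneg N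
    have h3 : (0:ℝ) ≤ N := Nat.cast_nonneg N
    have h4 := mul_le_mul hN2T h1 h2 (by linarith only [hT0] : (0:ℝ) ≤ 2 * T)
    linarith only [h3, h4]
  have hPN2 : PN ≤ c₂ * A * (T * Real.log x) := by
    have h1 : (N:ℝ) ^ (-(M / 2)) ≤ T ^ (-(M / 2)) :=
      Real.rpow_le_rpow_of_nonpos hT0 hTN (by linarith only [hM])
    have h2 : Real.log (c₁ + x / Real.sqrt N) ^ L ≤ A * Real.log x ^ L :=
      (hpow N hN1 hNx2 hN2T).2
    have h3 : 0 < Real.log (c₁ + x / Real.sqrt N) ^ L :=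
      Real.rpow_pos_of_pos (hellpos N hN1 hNx2) L
    have h4 : (N:ℝ) ^ (-(M / 2)) * Real.log (c₁ + x / Real.sqrt N) ^ L
        ≤ T ^ (-(M / 2)) * (A * Real.log x ^ L) :=
      mul_le_mul h1 h2 h3.le (by positivity)
    calc PN = c₂ * x ^ M * ((N:ℝ) ^ (-(M / 2)) * Real.log (c₁ + x / Real.sqrt N) ^ L) := by
          rw [hPN_def]; ring
      _ ≤ c₂ * x ^ M * (T ^ (-(M / 2)) * (A * Real.log x ^ L)) :=
          mul_le_mul_of_nonneg_left h4 (by positivity)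
      _ = c₂ * A * (x ^ M * T ^ (-(M / 2)) * Real.log x ^ L) := by ring
      _ = c₂ * A * (T * Real.log x) := by rw [hkey]
  have hRHS : (N:ℝ) * Real.log N - N + PN ≤ C * (T * Real.log x) := by
    rw [hC_def]; linarith only [hgN, hPN2]
  -- the rearranged maximality inequality
  have hmain : (n:ℝ) * Real.log n - n + Pn ≤ (N:ℝ) * Real.log N - N + PN := by
    linarith only [hmaxN]
  -- entropy lower bound : n log n - n ≥ -1
  have hglb : -1 ≤ (n:ℝ) * Real.log n - n := by
    have h1 := Real.log_le_sub_one_of_pos (show (0:ℝ) < (n:ℝ)⁻¹ by positivity)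
    rw [Real.log_inv] at h1
    have h2 : (n:ℝ) * (n:ℝ)⁻¹ = 1 := mul_inv_cancel₀ hn0.ne'
    have h3 := mul_le_mul_of_nonneg_left h1 hn0.le
    rw [mul_sub, h2, mul_one, mul_neg] at h3
    linarith only [h3]
  have hTlx1 : 1 ≤ T * Real.log x := by
    have h0 := mul_le_mul hT1 hlx1 (by norm_num) (by linarith only [hT1])
    linarith only [h0]
  -- lower bound for n
  have hlow : ε * T ≤ (n:ℝ) := by
    by_contra hcon
    push_neg at hcon
    have hn2T : (n:ℝ) ≤ 2 * T := by
      have h0 := mul_le_mul_of_nonneg_right (hε1.trans one_le_two) hT0.le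
      linarith only [h0, hcon]
    have h1 : al * Real.log x ^ L ≤ Real.log (c₁ + x / Real.sqrt n) ^ L :=
      (hpow n hn1 hnx2 hn2T).1
    have h2 : (ε * T) ^ (-(M / 2)) ≤ (n:ℝ) ^ (-(M / 2)) :=
      Real.rpow_le_rpow_of_nonpos hn0 hcon.le (by linarith only [hM])
    have h4 : (ε * T) ^ (-(M / 2)) = ε ^ (-(M / 2)) * T ^ (-(M / 2)) :=
      Real.mul_rpow hε0.le hT0.le
    have h3 : c₂ * x ^ M * (ε * T) ^ (-(M / 2)) * (al * Real.log x ^ L) ≤ Pn := by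
      have h5 : (ε * T) ^ (-(M / 2)) * (al * Real.log x ^ L)
          ≤ (n:ℝ) ^ (-(M / 2)) * Real.log (c₁ + x / Real.sqrt n) ^ L :=
        mul_le_mul h2 h1 (by positivity) (by positivity)
      calc c₂ * x ^ M * (ε * T) ^ (-(M / 2)) * (al * Real.log x ^ L)
          = c₂ * x ^ M * ((ε * T) ^ (-(M / 2)) * (al * Real.log x ^ L)) := by ring
        _ ≤ c₂ * x ^ M * ((n:ℝ) ^ (-(M / 2)) * Real.log (c₁ + x / Real.sqrt n) ^ L) :=
            mul_le_mul_of_nonneg_left h5 (by positivity)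
        _ = Pn := by rw [hPn_def]; ring
    have h6 : c₂ * x ^ M * (ε * T) ^ (-(M / 2)) * (al * Real.log x ^ L)
        = c₂ * al * ε ^ (-(M / 2)) * (T * Real.log x) := by
      rw [h4, ← hkey]; ring
    have h7 : 2 * (C + 1) * (T * Real.log x) ≤ Pn := by
      calc 2 * (C + 1) * (T * Real.log x)
          ≤ c₂ * al * ε ^ (-(M / 2)) * (T * Real.log x) :=
            mul_le_mul_of_nonneg_right hεkey (by positivity)
        _ = c₂ * x ^ M * (ε * T) ^ (-(M / 2)) * (al * Real.log x ^ L) := h6.symm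
        _ ≤ Pn := h3
    have hCw : 0 ≤ C * (T * Real.log x) := by positivity
    linarith only [h7, hmain, hRHS, hglb, hTlx1, hCw]
  -- upper bound for n
  have hup : (n:ℝ) ≤ K * T := by
    by_contra hcon
    push_neg at hcon
    have hgn : (n:ℝ) * Real.log n - n ≤ C * (T * Real.log x) := by
      linarith only [hmain, hRHS, hPn0]
    have hTn : T ≤ (n:ℝ) := by
      have h0 := mul_le_mul_of_nonneg_right hK1 hT0.le
      linarith only [h0, hcon]
    have hlogn : M / (M + 2) * Real.log x ≤ Real.log n := by
      have h1 := Real.log_le_log (Real.rpow_pos_of_pos hx0 (M / (M + 2))) (hT3.trans hTn)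
      rwa [Real.log_rpow hx0] at h1
    have hlogx_big : 2 * (M + 2) / M ≤ Real.log x := le_trans (le_max_right _ _) hlogmax
    set q : ℝ := M / (2 * (M + 2)) * Real.log x with hq_def
    have hq1 : 1 ≤ q := by
      rw [hq_def]
      have h1 : M / (2 * (M + 2)) * (2 * (M + 2) / M) = 1 := by field_simp
      have h2 := mul_le_mul_of_nonneg_left hlogx_big
        (show (0:ℝ) ≤ M / (2 * (M + 2)) by positivity)
      linarith only [h1, h2]
    have hlogn2 : 2 * q ≤ Real.log n := by
      rw [hq_def]
      calc 2 * (M / (2 * (M + 2)) * Real.log x) = M / (M + 2) * Real.log x := by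
            field_simp
        _ ≤ Real.log n := hlogn
    have hKq : K * (M / (2 * (M + 2))) = C + 1 := by
      rw [hK_def]; field_simp
    have hstep : (C + 1) * (T * Real.log x) ≤ (n:ℝ) * Real.log n - n := by
      have hq0 : 0 < q := by linarith only [hq1]
      have h1 : K * T * q ≤ (n:ℝ) * q :=
        mul_le_mul_of_nonneg_right hcon.le hq0.le
      have h2 : (n:ℝ) * q ≤ (n:ℝ) * (Real.log n - 1) :=
        mul_le_mul_of_nonneg_left (by linarith only [hlogn2, hq1]) hn0.le
      have h3 : K * T * q = (C + 1) * (T * Real.log x) := by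
        rw [hq_def, ← hKq]; ring
      linarith only [h1, h2, h3]
    linarith only [hstep, hgn, hTlx1]
  constructor
  · rw [mul_assoc, ← hT_def]; exact hlow
  · rw [mul_assoc, ← hT_def]; exact hup
end

section
/- Let m ∈ (1, ∞), r = 0, and set M = min(m, 2). If a family of random variables S satisfies max(P(S ≥ x), P(S ≤ -x)) ≤ C exp(-c x^{2M/(M+2)} (log x)^{M/(M+2)}) for all x ≥ 2, then for all p ≥ 2, E[|S|^p]^{1/p} ≤ C₁ p^{1/2 + 1/M} / √(log p) ≤ C₁ p^{1/2 + 1/min(m,2)} / √(log p). -/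
open MeasureTheory ProbabilityTheory Real

open scoped ENNReal

private lemma log_le_rpow_div (u q : ℝ) (hu : 1 ≤ u) (hq : 0 < q) :
    Real.log u ≤ u ^ q / q := by
  have hu0 : 0 < u := lt_of_lt_of_le one_pos hu
  have h1 : Real.log (u ^ q) = q * Real.log u := Real.log_rpow hu0 q
  have h2 : Real.log (u ^ q) ≤ u ^ q - 1 := Real.log_le_sub_one_of_pos (Real.rpow_pos_of_pos hu0 q)
  rw [h1] at h2
  rw [le_div_iff₀ hq]
  linarith

private lemma aux_exp_le (c q w p x₀ t : ℝ) (hc : 0 < c) (hq : 0 < q) (hw : 0 ≤ w)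
    (hx₀ : 2 ≤ x₀) (ht : x₀ ≤ t) (hp : 0 ≤ p)
    (hcond : p + 2 ≤ c * q * (x₀ ^ q * Real.log x₀ ^ w)) :
    Real.exp (-c * t ^ q * Real.log t ^ w) ≤ (x₀ / t) ^ (p + 2) := by
  have hx0 : (0:ℝ) < x₀ := by linarith
  have ht0 : (0:ℝ) < t := by linarith
  have hdiv : (0:ℝ) < x₀ / t := div_pos hx0 ht0
  have hu : (1:ℝ) ≤ t / x₀ := (one_le_div hx0).2 ht
  have hlogx : 0 < Real.log x₀ := Real.log_pos (by linarith)
  have hlogt : Real.log x₀ ≤ Real.log t := Real.log_le_log hx0 ht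
  -- key real inequality
  have hkey : (p + 2) * Real.log (t / x₀) ≤ c * t ^ q * Real.log t ^ w := by
    have l1 : Real.log (t / x₀) ≤ (t / x₀) ^ q / q := log_le_rpow_div _ q hu hq
    have l2 : (t / x₀) ^ q = t ^ q / x₀ ^ q := Real.div_rpow ht0.le hx0.le q
    have hxq : 0 < x₀ ^ q := Real.rpow_pos_of_pos hx0 q
    have htq : 0 < t ^ q := Real.rpow_pos_of_pos ht0 q
    have l3 : Real.log x₀ ^ w ≤ Real.log t ^ w :=
      Real.rpow_le_rpow hlogx.le hlogt hw
    have l4 : 0 < Real.log x₀ ^ w := Real.rpow_pos_of_pos hlogx w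
    have step1 : (p + 2) * Real.log (t / x₀) ≤ (p + 2) * (t ^ q / x₀ ^ q / q) := by
      apply mul_le_mul_of_nonneg_left _ (by linarith)
      rw [← l2]; exact l1.trans (by rw [l2])
    have step2 : (p + 2) * (t ^ q / x₀ ^ q / q) ≤ c * t ^ q * Real.log x₀ ^ w := by
      rw [div_div, mul_div_assoc', div_le_iff₀ (by positivity : (0:ℝ) < x₀ ^ q * q)]
      nlinarith [mul_le_mul_of_nonneg_right hcond htq.le]
    have step3 : c * t ^ q * Real.log x₀ ^ w ≤ c * t ^ q * Real.log t ^ w := by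
      apply mul_le_mul_of_nonneg_left l3 (by positivity)
    linarith
  have hrw : (x₀ / t) ^ (p + 2) = Real.exp (Real.log (x₀ / t) * (p + 2)) :=
    Real.rpow_def_of_pos hdiv _
  rw [hrw, Real.exp_le_exp]
  have : Real.log (x₀ / t) = - Real.log (t / x₀) := by
    rw [← Real.log_inv]; congr 1; field_simp
  rw [this]
  nlinarith [hkey]

private lemma aux_cover (u : ℝ) (hu : 1 ≤ u) : ∃ n : ℕ, (2:ℝ)^n ≤ u ∧ u < 2^(n+1) := by
  have hex : ∃ n : ℕ, u < 2^(n+1) := by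
    obtain ⟨n, hn⟩ := pow_unbounded_of_one_lt u (by norm_num : (1:ℝ) < 2)
    exact ⟨n, lt_of_lt_of_le hn (pow_le_pow_right₀ (by norm_num) (Nat.le_succ n))⟩
  classical
  refine ⟨Nat.find hex, ?_, Nat.find_spec hex⟩
  rcases Nat.eq_zero_or_pos (Nat.find hex) with h0 | hpos
  · rw [h0]; simpa using hu
  · have hmin := Nat.find_min hex (Nat.sub_lt hpos one_pos)
    have : Nat.find hex - 1 + 1 = Nat.find hex := Nat.succ_pred_eq_of_pos hpos
    rw [this] at hmin
    linarith [not_lt.mp hmin]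

private lemma meas_abs_rpow {Ω : Type*} [MeasurableSpace Ω] {S : Ω → ℝ}
    (hS : Measurable S) (p : ℝ) : Measurable fun ω => |S ω| ^ p := by
  measurability


set_option maxHeartbeats 1000000

/-- Tail-to-moment conversion for Example 2: if
`T(S,x) ≤ C exp(-c x^{2M/(M+2)} (log x)^{M/(M+2)})` for `x ≥ 2`, with `M = min(m,2)`,
`m > 1`, then `|S|_p ≤ C₁ p^{1/2 + 1/M} / √(log p)` for all `p ≥ 2`. -/
theorem stmt19
    {Ω : Type*} [MeasurableSpace Ω] (μ : Measure Ω) [IsProbabilityMeasure μ]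
    (S : Ω → ℝ) (hS : Measurable S) (m C c : ℝ) (hm : 1 < m)
    (hC : 0 < C) (hc : 0 < c)
    (htail : ∀ x : ℝ, 2 ≤ x →
      max ((μ {ω | x ≤ S ω}).toReal) ((μ {ω | S ω ≤ -x}).toReal)
        ≤ C * Real.exp (-c * x ^ (2 * min m 2 / (min m 2 + 2))
            * Real.log x ^ (min m 2 / (min m 2 + 2)))) :
    ∃ C₁ : ℝ, 0 < C₁ ∧ ∀ p : ℝ, 2 ≤ p →
      (∫ ω, |S ω| ^ p ∂μ) ^ (1 / p)
        ≤ C₁ * p ^ (1 / 2 + 1 / min m 2) / Real.sqrt (Real.log p) := by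
  set M := min m 2 with hMdef
  have hM1 : 1 < M := lt_min hm one_lt_two
  have hM2 : M ≤ 2 := min_le_right _ _
  set q := 2 * M / (M + 2) with hqdef
  set w := M / (M + 2) with hwdef
  have hMpos : (0:ℝ) < M := by linarith
  have hM2pos : (0:ℝ) < M + 2 := by linarith
  have hq0 : 0 < q := div_pos (by linarith) hM2pos
  have hq1 : q ≤ 1 := by rw [hqdef, div_le_one hM2pos]; linarith
  have hw0 : 0 < w := div_pos hMpos hM2pos
  have hw1 : w ≤ 1 := by rw [hwdef, div_le_one hM2pos]; linarith
  have hqw : q / 2 = w := by rw [hqdef, hwdef]; ring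
  have hinvq : 1 / q = 1 / 2 + 1 / M := by
    rw [hqdef]; field_simp
  set K := 2 + (4 / (c * q)) ^ (1 / q) with hKdef
  have hK2 : (2:ℝ) ≤ K := le_add_of_nonneg_right (Real.rpow_nonneg (by positivity) _)
  have hKpos : (0:ℝ) < K := by linarith
  have hKq : 4 / (c * q) ≤ K ^ q := by
    have h1 : (4 / (c * q)) ^ (1 / q) ≤ K := le_add_of_nonneg_left (by norm_num)
    have h2 : ((4 / (c * q)) ^ (1 / q)) ^ q ≤ K ^ q :=
      Real.rpow_le_rpow (Real.rpow_nonneg (by positivity) _) h1 hq0.le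
    rwa [← Real.rpow_mul (by positivity), one_div_mul_cancel hq0.ne', Real.rpow_one] at h2
  refine ⟨2 * K * (1 + 4 * C), by positivity, ?_⟩
  intro p hp
  have hp1 : (1:ℝ) < p := by linarith
  have hp0 : (0:ℝ) < p := by linarith
  set lp := Real.log p with hlpdef
  have hlp : 0 < lp := Real.log_pos hp1
  have hslp : 0 < Real.sqrt lp := Real.sqrt_pos.2 hlp
  set R := p ^ (1 / q) / Real.sqrt lp with hRdef
  have hpq1 : p ≤ p ^ (1/q) := by
    nth_rewrite 1 [← Real.rpow_one p]
    exact Real.rpow_le_rpow_of_exponent_le hp1.le (one_le_one_div hq0 hq1)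
  have hR1 : (1:ℝ) ≤ R := by
    rw [hRdef, le_div_iff₀ hslp, one_mul]
    have h1 : Real.sqrt lp ≤ Real.sqrt p := Real.sqrt_le_sqrt (by
      have := Real.log_le_sub_one_of_pos hp0; linarith)
    have h2 : Real.sqrt p ≤ p := by
      rw [Real.sqrt_eq_rpow]
      nth_rewrite 2 [← Real.rpow_one p]
      exact Real.rpow_le_rpow_of_exponent_le hp1.le (by norm_num)
    linarith
  have hRpos : 0 < R := by linarith
  set x₀ := K * R with hx₀def
  have hx₀2 : (2:ℝ) ≤ x₀ := by
    calc (2:ℝ) = 2 * 1 := by ring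
    _ ≤ K * R := mul_le_mul hK2 hR1 one_pos.le hKpos.le
  have hx₀pos : (0:ℝ) < x₀ := by linarith
  -- log x₀ ≥ lp / 2
  have hlogx₀ : lp / 2 ≤ Real.log x₀ := by
    have e1 : Real.log x₀ = Real.log K + ((1/q) * lp - Real.log lp / 2) := by
      rw [hx₀def, Real.log_mul hKpos.ne' hRpos.ne', hRdef,
        Real.log_div (by positivity) hslp.ne', Real.log_rpow hp0, Real.log_sqrt hlp.le]
    have h2 : 0 ≤ Real.log K := Real.log_nonneg (by linarith)
    have h3 : lp ≤ (1/q) * lp := by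
      nth_rewrite 1 [← one_mul lp]
      exact mul_le_mul_of_nonneg_right (one_le_one_div hq0 hq1) hlp.le
    have h4 : Real.log lp ≤ lp := by
      have := Real.log_le_sub_one_of_pos hlp; linarith
    rw [e1]; linarith
  -- x₀ ^ q ≥ (4/(cq)) * p / lp^w
  have hlpw : 0 < lp ^ w := Real.rpow_pos_of_pos hlp w
  have hx₀q : 4 / (c * q) * (p / lp ^ w) ≤ x₀ ^ q := by
    have e1 : x₀ ^ q = K ^ q * (p / lp ^ w) := by
      rw [hx₀def, Real.mul_rpow hKpos.le hRpos.le, hRdef,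
        Real.div_rpow (Real.rpow_nonneg hp0.le _) hslp.le,
        ← Real.rpow_mul hp0.le, one_div_mul_cancel hq0.ne', Real.rpow_one,
        Real.sqrt_eq_rpow, ← Real.rpow_mul hlp.le]
      rw [show (1:ℝ)/2 * q = q / 2 by ring, hqw]
    rw [e1]
    exact mul_le_mul_of_nonneg_right hKq (by positivity)
  -- the key condition for aux_exp_le
  have hcond : p + 2 ≤ c * q * (x₀ ^ q * Real.log x₀ ^ w) := by
    have l3 : (lp / 2) ^ w ≤ Real.log x₀ ^ w :=
      Real.rpow_le_rpow (by positivity) hlogx₀ hw0.le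
    have h2w : (2:ℝ) ^ w ≤ 2 := by
      nth_rewrite 2 [← Real.rpow_one 2]
      exact Real.rpow_le_rpow_of_exponent_le one_le_two hw1
    have l4 : lp ^ w / 2 ≤ (lp / 2) ^ w := by
      rw [Real.div_rpow hlp.le (by norm_num)]
      exact div_le_div_of_nonneg_left hlpw.le (by positivity) h2w
    have l5 : 4 / (c * q) * (p / lp ^ w) * (lp ^ w / 2) ≤ x₀ ^ q * Real.log x₀ ^ w :=
      mul_le_mul hx₀q (le_trans l4 l3) (by positivity)
        (Real.rpow_nonneg (by positivity) _)
    have l6 : 4 / (c * q) * (p / lp ^ w) * (lp ^ w / 2) = 2 * p / (c * q) := by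
      field_simp; ring
    have l7 : c * q * (2 * p / (c * q)) ≤ c * q * (x₀ ^ q * Real.log x₀ ^ w) := by
      apply mul_le_mul_of_nonneg_left _ (by positivity)
      rw [← l6]; exact l5
    have l8 : c * q * (2 * p / (c * q)) = 2 * p := by field_simp
    rw [l8] at l7
    linarith
  -- tail bound for |S|
  have habs : ∀ x : ℝ, 2 ≤ x →
      μ {ω | x ≤ |S ω|} ≤ ENNReal.ofReal (2 * C * Real.exp (-c * x ^ q * Real.log x ^ w)) := by
    intro x hx
    have hsub : {ω | x ≤ |S ω|} ⊆ {ω | x ≤ S ω} ∪ {ω | S ω ≤ -x} := by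
      intro ω hω
      simp only [Set.mem_setOf_eq] at hω
      rcases le_abs.mp hω with h | h
      · exact Or.inl h
      · exact Or.inr (by simp only [Set.mem_setOf_eq]; linarith)
    have hexp : 0 ≤ C * Real.exp (-c * x ^ q * Real.log x ^ w) := by positivity
    have h1 : μ {ω | x ≤ S ω} ≤ ENNReal.ofReal (C * Real.exp (-c * x ^ q * Real.log x ^ w)) := by
      rw [← ENNReal.ofReal_toReal (measure_ne_top μ {ω | x ≤ S ω})]
      exact ENNReal.ofReal_le_ofReal ((le_max_left _ _).trans (htail x hx))
    have h2 : μ {ω | S ω ≤ -x} ≤ ENNReal.ofReal (C * Real.exp (-c * x ^ q * Real.log x ^ w)) := by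
      rw [← ENNReal.ofReal_toReal (measure_ne_top μ {ω | S ω ≤ -x})]
      exact ENNReal.ofReal_le_ofReal ((le_max_right _ _).trans (htail x hx))
    calc μ {ω | x ≤ |S ω|} ≤ μ ({ω | x ≤ S ω} ∪ {ω | S ω ≤ -x}) := measure_mono hsub
      _ ≤ μ {ω | x ≤ S ω} + μ {ω | S ω ≤ -x} := measure_union_le _ _
      _ ≤ ENNReal.ofReal (C * Real.exp (-c * x ^ q * Real.log x ^ w))
          + ENNReal.ofReal (C * Real.exp (-c * x ^ q * Real.log x ^ w)) := add_le_add h1 h2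
      _ = ENNReal.ofReal (2 * C * Real.exp (-c * x ^ q * Real.log x ^ w)) := by
          rw [← ENNReal.ofReal_add hexp hexp]; congr 1; ring
  -- per-shell tail bound
  have htailn : ∀ n : ℕ, μ {ω | x₀ * 2 ^ n ≤ |S ω|}
      ≤ ENNReal.ofReal (2 * C * ((x₀ / (x₀ * 2 ^ n)) ^ (p + 2))) := by
    intro n
    have h2n : (1:ℝ) ≤ 2 ^ n := one_le_pow₀ (by norm_num : (1:ℝ) ≤ 2)
    have ht : x₀ ≤ x₀ * 2 ^ n := le_mul_of_one_le_right hx₀pos.le h2n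
    have hx2 : (2:ℝ) ≤ x₀ * 2 ^ n := le_trans hx₀2 ht
    refine le_trans (habs _ hx2) (ENNReal.ofReal_le_ofReal ?_)
    exact mul_le_mul_of_nonneg_left
      (aux_exp_le c q w p x₀ (x₀ * 2 ^ n) hc hq0 hw0.le hx₀2 ht hp0.le hcond)
      (by positivity)
  -- real bookkeeping per shell
  have hreal : ∀ n : ℕ, (x₀ * 2 ^ (n+1)) ^ p * (2 * C * ((x₀ / (x₀ * 2 ^ n)) ^ (p + 2)))
      ≤ 2 * C * (2 * x₀) ^ p * (1/4 : ℝ) ^ n := by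
    intro n
    have ha : (0:ℝ) < 2 ^ n := by positivity
    have e2 : (x₀ * 2 ^ (n+1)) ^ p = (2 * x₀) ^ p * ((2:ℝ) ^ n) ^ p := by
      rw [show x₀ * 2 ^ (n+1) = (2 * x₀) * 2 ^ n by rw [pow_succ]; ring,
        Real.mul_rpow (by positivity) ha.le]
    have e3 : x₀ / (x₀ * 2 ^ n) = ((2:ℝ) ^ n)⁻¹ := by field_simp
    have e4 : (((2:ℝ) ^ n)⁻¹) ^ (p + 2) = (((2:ℝ) ^ n) ^ p * ((2:ℝ) ^ n) ^ (2:ℝ))⁻¹ := by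
      rw [Real.inv_rpow ha.le, Real.rpow_add ha]
    have e5 : ((2:ℝ) ^ n) ^ (2:ℝ) = 4 ^ n := by
      rw [Real.rpow_two, ← pow_mul, mul_comm n 2, pow_mul]; norm_num
    rw [e2, e3, e4, e5]
    apply le_of_eq
    have hb : ((2:ℝ) ^ n) ^ p ≠ 0 := (Real.rpow_pos_of_pos ha p).ne'
    have hb4 : (0:ℝ) < 4 ^ n := by positivity
    rw [one_div, inv_pow]
    field_simp
  -- set up lintegral
  have hmeasR : Measurable fun ω => |S ω| ^ p := meas_abs_rpow hS p
  have hmeas : Measurable fun ω => ENNReal.ofReal (|S ω| ^ p) := hmeasR.ennreal_ofReal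
  have hA : MeasurableSet {ω | x₀ ≤ |S ω|} := measurableSet_le measurable_const hS.abs
  have hcompl : ∫⁻ ω in {ω | x₀ ≤ |S ω|}ᶜ, ENNReal.ofReal (|S ω| ^ p) ∂μ
      ≤ ENNReal.ofReal (x₀ ^ p) := by
    calc ∫⁻ ω in {ω | x₀ ≤ |S ω|}ᶜ, ENNReal.ofReal (|S ω| ^ p) ∂μ
        ≤ ∫⁻ _ in {ω | x₀ ≤ |S ω|}ᶜ, ENNReal.ofReal (x₀ ^ p) ∂μ := by
          apply setLIntegral_mono measurable_const
          intro ω hω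
          simp only [Set.mem_compl_iff, Set.mem_setOf_eq, not_le] at hω
          exact ENNReal.ofReal_le_ofReal (Real.rpow_le_rpow (abs_nonneg _) hω.le hp0.le)
      _ = ENNReal.ofReal (x₀ ^ p) * μ {ω | x₀ ≤ |S ω|}ᶜ := setLIntegral_const _ _
      _ ≤ ENNReal.ofReal (x₀ ^ p) * 1 := mul_le_mul_right prob_le_one _
      _ = ENNReal.ofReal (x₀ ^ p) := mul_one _
  set B : ℕ → Set Ω := fun n => {ω | x₀ * 2 ^ n ≤ |S ω| ∧ |S ω| < x₀ * 2 ^ (n+1)} with hBdef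
  have hcover : {ω | x₀ ≤ |S ω|} ⊆ ⋃ n, B n := by
    intro ω hω
    have hω' : x₀ ≤ |S ω| := hω
    have hu : 1 ≤ |S ω| / x₀ := (one_le_div hx₀pos).2 hω'
    obtain ⟨n, h1, h2⟩ := aux_cover _ hu
    refine Set.mem_iUnion.2 ⟨n, ?_, ?_⟩
    · rw [mul_comm]
      exact (le_div_iff₀ hx₀pos).1 h1
    · rw [mul_comm]
      exact (div_lt_iff₀ hx₀pos).1 h2
  have hBn : ∀ n : ℕ, ∫⁻ ω in B n, ENNReal.ofReal (|S ω| ^ p) ∂μ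
      ≤ ENNReal.ofReal (2 * C * (2 * x₀) ^ p * (1/4 : ℝ) ^ n) := by
    intro n
    calc ∫⁻ ω in B n, ENNReal.ofReal (|S ω| ^ p) ∂μ
        ≤ ∫⁻ _ in B n, ENNReal.ofReal ((x₀ * 2 ^ (n+1)) ^ p) ∂μ := by
          apply setLIntegral_mono measurable_const
          intro ω hω
          exact ENNReal.ofReal_le_ofReal
            (Real.rpow_le_rpow (abs_nonneg _) hω.2.le hp0.le)
      _ = ENNReal.ofReal ((x₀ * 2 ^ (n+1)) ^ p) * μ (B n) := setLIntegral_const _ _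
      _ ≤ ENNReal.ofReal ((x₀ * 2 ^ (n+1)) ^ p)
            * ENNReal.ofReal (2 * C * ((x₀ / (x₀ * 2 ^ n)) ^ (p + 2))) := by
          apply mul_le_mul_right
          exact le_trans (measure_mono fun ω hω => hω.1) (htailn n)
      _ = ENNReal.ofReal ((x₀ * 2 ^ (n+1)) ^ p * (2 * C * ((x₀ / (x₀ * 2 ^ n)) ^ (p + 2)))) :=
          (ENNReal.ofReal_mul (by positivity)).symm
      _ ≤ ENNReal.ofReal (2 * C * (2 * x₀) ^ p * (1/4 : ℝ) ^ n) :=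
          ENNReal.ofReal_le_ofReal (hreal n)
  have hsum : ∫⁻ ω in {ω | x₀ ≤ |S ω|}, ENNReal.ofReal (|S ω| ^ p) ∂μ
      ≤ ENNReal.ofReal (2 * C * (2 * x₀) ^ p) * 2 := by
    calc ∫⁻ ω in {ω | x₀ ≤ |S ω|}, ENNReal.ofReal (|S ω| ^ p) ∂μ
        ≤ ∫⁻ ω in ⋃ n, B n, ENNReal.ofReal (|S ω| ^ p) ∂μ := lintegral_mono_set hcover
      _ ≤ ∑' n, ∫⁻ ω in B n, ENNReal.ofReal (|S ω| ^ p) ∂μ := lintegral_iUnion_le _ _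
      _ ≤ ∑' n, ENNReal.ofReal (2 * C * (2 * x₀) ^ p * (1/4 : ℝ) ^ n) :=
          ENNReal.tsum_le_tsum hBn
      _ = ∑' n, ENNReal.ofReal (2 * C * (2 * x₀) ^ p) * ENNReal.ofReal ((1/4 : ℝ) ^ n) := by
          congr 1; funext n; rw [← ENNReal.ofReal_mul (by positivity)]
      _ = ENNReal.ofReal (2 * C * (2 * x₀) ^ p) * ∑' n, ENNReal.ofReal ((1/4 : ℝ) ^ n) :=
          ENNReal.tsum_mul_left
      _ ≤ ENNReal.ofReal (2 * C * (2 * x₀) ^ p) * 2 := by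
          apply mul_le_mul_right
          have h14 : ENNReal.ofReal (1/4 : ℝ) ≤ 2⁻¹ := by
            have h12 : ENNReal.ofReal (1/2 : ℝ) = 2⁻¹ := by
              rw [show (1/2 : ℝ) = (2:ℝ)⁻¹ by norm_num,
                ENNReal.ofReal_inv_of_pos (by norm_num : (0:ℝ) < 2), ENNReal.ofReal_ofNat]
            rw [← h12]
            exact ENNReal.ofReal_le_ofReal (by norm_num)
          calc (∑' n, ENNReal.ofReal ((1/4 : ℝ) ^ n))
              ≤ (∑' n : ℕ, (2⁻¹ : ℝ≥0∞) ^ n) := by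
                apply ENNReal.tsum_le_tsum
                intro n
                rw [ENNReal.ofReal_pow (by norm_num : (0:ℝ) ≤ 1/4)]
                exact pow_le_pow_left' h14 n
            _ = (1 - 2⁻¹)⁻¹ := ENNReal.tsum_geometric _
            _ = 2 := by rw [ENNReal.one_sub_inv_two, inv_inv]
  have htot : ∫⁻ ω, ENNReal.ofReal (|S ω| ^ p) ∂μ
      ≤ ENNReal.ofReal ((1 + 4 * C) * (2 * x₀) ^ p) := by
    have h2 : ENNReal.ofReal (2 * C * (2 * x₀) ^ p) * 2
        = ENNReal.ofReal (4 * C * (2 * x₀) ^ p) := by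
      rw [show (2 : ℝ≥0∞) = ENNReal.ofReal (2:ℝ) by rw [ENNReal.ofReal_ofNat],
        ← ENNReal.ofReal_mul (by positivity)]
      congr 1; ring
    calc ∫⁻ ω, ENNReal.ofReal (|S ω| ^ p) ∂μ
        = ∫⁻ ω in {ω | x₀ ≤ |S ω|}, ENNReal.ofReal (|S ω| ^ p) ∂μ
          + ∫⁻ ω in {ω | x₀ ≤ |S ω|}ᶜ, ENNReal.ofReal (|S ω| ^ p) ∂μ :=
          (lintegral_add_compl _ hA).symm
      _ ≤ ENNReal.ofReal (2 * C * (2 * x₀) ^ p) * 2 + ENNReal.ofReal (x₀ ^ p) :=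
          add_le_add hsum hcompl
      _ = ENNReal.ofReal (4 * C * (2 * x₀) ^ p + x₀ ^ p) := by
          rw [h2, ← ENNReal.ofReal_add (by positivity) (by positivity)]
      _ ≤ ENNReal.ofReal ((1 + 4 * C) * (2 * x₀) ^ p) := by
          apply ENNReal.ofReal_le_ofReal
          have hxx : x₀ ^ p ≤ (2 * x₀) ^ p :=
            Real.rpow_le_rpow hx₀pos.le (by linarith) hp0.le
          nlinarith
  have hint : ∫ ω, |S ω| ^ p ∂μ ≤ (1 + 4 * C) * (2 * x₀) ^ p := by
    rw [integral_eq_lintegral_of_nonneg_ae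
      (Filter.Eventually.of_forall fun ω => Real.rpow_nonneg (abs_nonneg _) p)
      hmeasR.aestronglyMeasurable]
    exact ENNReal.toReal_le_of_le_ofReal (by positivity) htot
  have hnn : 0 ≤ ∫ ω, |S ω| ^ p ∂μ :=
    integral_nonneg fun ω => Real.rpow_nonneg (abs_nonneg _) p
  calc (∫ ω, |S ω| ^ p ∂μ) ^ (1/p)
      ≤ ((1 + 4 * C) * (2 * x₀) ^ p) ^ (1/p) :=
        Real.rpow_le_rpow hnn hint (by positivity)
    _ = (1 + 4 * C) ^ (1/p) * (2 * x₀) := by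
        rw [Real.mul_rpow (by positivity) (Real.rpow_nonneg (by positivity) _),
          ← Real.rpow_mul (by positivity), mul_one_div, div_self hp0.ne', Real.rpow_one]
    _ ≤ (1 + 4 * C) * (2 * x₀) := by
        apply mul_le_mul_of_nonneg_right _ (by positivity)
        nth_rewrite 2 [← Real.rpow_one (1 + 4 * C)]
        exact Real.rpow_le_rpow_of_exponent_le (by linarith)
          (by rw [div_le_one hp0]; linarith)
    _ = 2 * K * (1 + 4 * C) * p ^ (1 / 2 + 1 / M) / Real.sqrt lp := by
        rw [← hinvq, hx₀def, hRdef]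
        field_simp
end
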